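/- arXiv:1607.06728 — 9 statements merged into one kernel-verified Lean document; each statement's English description precedes it below -/
import Mathlib

section
/- Let ω : ℝⁿ → (0,∞) be a positive measurable function that is uniformly bounded from below, i.e. inf_{ξ∈ℝⁿ} ω(ξ) = c > 0, and satisfies the δ condition (G) for some 0 < δ < 1. Then ω satisfies the sub-multiplicative condition (SM). -/
/-!
Since `ω ≥ c > 0` and `δ ≤ 1`, the function `t ↦ t ^ (δ - 1)` is bounded by `c ^ (δ - 1)` on the
range of `ω`, so `ω ^ δ ≤ c ^ (δ - 1) * ω`. Substituting this into both terms of (G) bounds each of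
them by `c ^ (δ - 1) * ω (ξ - η) * ω η`, which is (SM) with constant `2 C c ^ (δ - 1)`.
-/

open MeasureTheory

/-- The δ condition (G) with parameter `0 < δ < 1`: for some `C > 0`,
`ω ξ ≤ C * (ω η * ω (ξ-η)^δ + ω η ^ δ * ω (ξ-η))` for all `ξ, η`. -/
def SatisfiesDeltaCondition {n : ℕ} (ω : EuclideanSpace ℝ (Fin n) → ℝ) (δ : ℝ) : Prop :=
  ∃ C : ℝ, 0 < C ∧ ∀ ξ η, ω ξ ≤ C * (ω η * ω (ξ - η) ^ δ + ω η ^ δ * ω (ξ - η))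

/-- The sub-multiplicative condition (SM): for some `C > 0`,
`ω ξ ≤ C * ω (ξ-η) * ω η` for all `ξ, η`. -/
def IsSubMultiplicative {n : ℕ} (ω : EuclideanSpace ℝ (Fin n) → ℝ) : Prop :=
  ∃ C : ℝ, 0 < C ∧ ∀ ξ η, ω ξ ≤ C * (ω (ξ - η) * ω η)

theorem Real.rpow_le_rpow_sub_one_mul_of_le {c x δ : ℝ} (hc : 0 < c) (hcx : c ≤ x) (hδ : δ ≤ 1) :
    x ^ δ ≤ c ^ (δ - 1) * x := by
  have hx : 0 < x := hc.trans_le hcx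
  calc x ^ δ = x ^ (δ - 1) * x := by rw [← Real.rpow_add_one hx.ne', sub_add_cancel]
    _ ≤ c ^ (δ - 1) * x :=
      mul_le_mul_of_nonneg_right (Real.rpow_le_rpow_of_nonpos hc hcx (by linarith)) hx.le

theorem subMultiplicative_of_deltaCondition_of_boundedBelow_general {n : ℕ}
    (ω : EuclideanSpace ℝ (Fin n) → ℝ) (c δ : ℝ)
    (hω_pos : ∀ ξ, 0 < ω ξ)
    (hc : 0 < c) (hinf : IsGLB (Set.range ω) c)
    (hδ₁ : δ < 1)
    (hG : SatisfiesDeltaCondition ω δ) :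
    IsSubMultiplicative ω := by
  obtain ⟨C, hC, hG⟩ := hG
  have hpow (ξ) : ω ξ ^ δ ≤ c ^ (δ - 1) * ω ξ :=
    Real.rpow_le_rpow_sub_one_mul_of_le hc (hinf.1 ⟨ξ, rfl⟩) hδ₁.le
  refine ⟨2 * C * c ^ (δ - 1), by positivity, fun ξ η => ?_⟩
  have ha := (hω_pos (ξ - η)).le
  have hb := (hω_pos η).le
  calc ω ξ ≤ C * (ω η * ω (ξ - η) ^ δ + ω η ^ δ * ω (ξ - η)) := hG ξ η
    _ ≤ C * (ω η * (c ^ (δ - 1) * ω (ξ - η)) + c ^ (δ - 1) * ω η * ω (ξ - η)) := by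
      gcongr <;> exact hpow _
    _ = 2 * C * c ^ (δ - 1) * (ω (ξ - η) * ω η) := by ring

/-- A positive measurable function on `ℝⁿ`, uniformly bounded from below (with infimum
`c > 0`) and satisfying the δ condition (G) for some `0 < δ < 1`, satisfies the
sub-multiplicative condition (SM). -/
theorem subMultiplicative_of_deltaCondition_of_boundedBelow {n : ℕ}
    (ω : EuclideanSpace ℝ (Fin n) → ℝ) (c δ : ℝ)
    (hω_pos : ∀ ξ, 0 < ω ξ) (hω_meas : Measurable ω)
    (hc : 0 < c) (hinf : IsGLB (Set.range ω) c)
    (hδ₀ : 0 < δ) (hδ₁ : δ < 1)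
    (hG : SatisfiesDeltaCondition ω δ) :
    IsSubMultiplicative ω :=
  subMultiplicative_of_deltaCondition_of_boundedBelow_general ω c δ hω_pos hc hinf hδ₁ hG
end

section
/- Let ω : ℝⁿ → (0,∞) be a positive measurable function such that 1/ω ∈ L¹(ℝⁿ) and ω satisfies the δ condition (G) for some 0 < δ < 1. Then the function ω^{1/(1−δ)} satisfies Beurling's condition (B), i.e. sup_{ξ∈ℝⁿ} ∫_{ℝⁿ} ω(ξ)^{1/(1−δ)}/(ω(ξ−η)^{1/(1−δ)} ω(η)^{1/(1−δ)}) dη < ∞. -/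
/-!
Write `a = ω η`, `b = ω (ξ - η)` and `p = 1/(1-δ)`. Condition (G) gives
`ω ξ ≤ 2C a^δ b` or `ω ξ ≤ 2C a b^δ`. Since `δp - p = -1`, raising to the power `p` and
dividing by `(ab)^p` bounds the Beurling quotient by `(2C)^p (1/a + 1/b)`. Integrating in `η`
and using translation and reflection invariance of Lebesgue measure, the integral is at most
`2 (2C)^p ‖1/ω‖₁`, uniformly in `ξ`.
-/

open MeasureTheory

theorem Real.rpow_div_rpow_mul_rpow_le_of_le_mul {δ K x a b : ℝ} (hδ : δ < 1) (hK : 0 ≤ K)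
    (hx : 0 ≤ x) (ha : 0 < a) (hb : 0 < b) (h : x ≤ K * (a ^ δ * b)) :
    x ^ (1 - δ)⁻¹ / (a ^ (1 - δ)⁻¹ * b ^ (1 - δ)⁻¹) ≤ K ^ (1 - δ)⁻¹ * a⁻¹ := by
  set p := (1 - δ)⁻¹ with hp
  have hp_pos : 0 < p := inv_pos.2 (sub_pos.2 hδ)
  have hδp : δ * p = -1 + p := by
    rw [hp]
    field_simp [(sub_pos.2 hδ).ne']
    ring
  have hpow : x ^ p ≤ K ^ p * a⁻¹ * (a ^ p * b ^ p) :=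
    calc x ^ p ≤ (K * (a ^ δ * b)) ^ p := Real.rpow_le_rpow hx h hp_pos.le
      _ = K ^ p * a ^ (δ * p) * b ^ p := by
        rw [Real.mul_rpow hK (by positivity), Real.mul_rpow (by positivity) hb.le,
          ← Real.rpow_mul ha.le, mul_assoc]
      _ = K ^ p * a⁻¹ * (a ^ p * b ^ p) := by
        rw [hδp, Real.rpow_add ha, Real.rpow_neg_one]
        ring
  rwa [div_le_iff₀ (by positivity)]

theorem Real.rpow_div_rpow_mul_rpow_le_of_le_mul_add {δ C x a b : ℝ} (hδ : δ < 1)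
    (hC : 0 ≤ C) (hx : 0 ≤ x) (ha : 0 < a) (hb : 0 < b)
    (h : x ≤ C * (a * b ^ δ + a ^ δ * b)) :
    x ^ (1 - δ)⁻¹ / (b ^ (1 - δ)⁻¹ * a ^ (1 - δ)⁻¹) ≤
      (2 * C) ^ (1 - δ)⁻¹ * (b⁻¹ + a⁻¹) := by
  have h2C : 0 ≤ 2 * C := by positivity
  rcases le_total (a * b ^ δ) (a ^ δ * b) with hab | hba
  · have hx' : x ≤ 2 * C * (a ^ δ * b) := by nlinarith
    calc _ = x ^ (1 - δ)⁻¹ / (a ^ (1 - δ)⁻¹ * b ^ (1 - δ)⁻¹) := by rw [mul_comm]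
      _ ≤ (2 * C) ^ (1 - δ)⁻¹ * a⁻¹ :=
        Real.rpow_div_rpow_mul_rpow_le_of_le_mul hδ h2C hx ha hb hx'
      _ ≤ _ := by gcongr; exact le_add_of_nonneg_left (inv_pos.2 hb).le
  · have hx' : x ≤ 2 * C * (b ^ δ * a) := by nlinarith
    calc _ ≤ (2 * C) ^ (1 - δ)⁻¹ * b⁻¹ :=
        Real.rpow_div_rpow_mul_rpow_le_of_le_mul hδ h2C hx hb ha hx'
      _ ≤ _ := by gcongr; exact le_add_of_nonneg_right (inv_pos.2 ha).le

theorem MeasureTheory.lintegral_sub_left_add_self {G : Type*} [MeasurableSpace G] [AddGroup G]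
    [MeasurableAdd G] [MeasurableNeg G] {μ : Measure G} [μ.IsAddLeftInvariant] [μ.IsNegInvariant]
    {f : G → ENNReal} (hf : AEMeasurable f μ) (ξ : G) :
    ∫⁻ η, f (ξ - η) + f η ∂μ = 2 * ∫⁻ η, f η ∂μ := by
  rw [lintegral_add_right' _ hf, lintegral_sub_left_eq_self, two_mul]

theorem beurling_of_deltaCondition_of_integrableInv_general {n : ℕ}
    (ω : EuclideanSpace ℝ (Fin n) → ℝ) (δ : ℝ)
    (hω_pos : ∀ ξ, 0 < ω ξ)
    (hint : Integrable (fun ξ => (ω ξ)⁻¹) volume)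
    (hδ₁ : δ < 1)
    (hG : SatisfiesDeltaCondition ω δ) :
    ∃ C : ℝ, 0 < C ∧ ∀ ξ,
      (∫⁻ η, ENNReal.ofReal (ω ξ ^ (1 - δ)⁻¹ /
        (ω (ξ - η) ^ (1 - δ)⁻¹ * ω η ^ (1 - δ)⁻¹)) ∂volume) ≤ ENNReal.ofReal C := by
  obtain ⟨C, hC, hGC⟩ := hG
  set K := ENNReal.ofReal ((2 * C) ^ (1 - δ)⁻¹)
  set I := ∫⁻ η, ENNReal.ofReal (ω η)⁻¹
  have hpointwise : ∀ ξ η, ENNReal.ofReal (ω ξ ^ (1 - δ)⁻¹ /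
      (ω (ξ - η) ^ (1 - δ)⁻¹ * ω η ^ (1 - δ)⁻¹)) ≤
        K * (ENNReal.ofReal (ω (ξ - η))⁻¹ + ENNReal.ofReal (ω η)⁻¹) := fun ξ η => by
    rw [← ENNReal.ofReal_add (inv_pos.2 (hω_pos _)).le (inv_pos.2 (hω_pos _)).le,
      ← ENNReal.ofReal_mul (by positivity)]
    exact ENNReal.ofReal_le_ofReal <| Real.rpow_div_rpow_mul_rpow_le_of_le_mul_add hδ₁
      hC.le (hω_pos ξ).le (hω_pos η) (hω_pos (ξ - η)) (hGC ξ η)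
  have hbound : ∀ ξ, ∫⁻ η, ENNReal.ofReal (ω ξ ^ (1 - δ)⁻¹ /
      (ω (ξ - η) ^ (1 - δ)⁻¹ * ω η ^ (1 - δ)⁻¹)) ≤ K * (2 * I) := fun ξ => by
    refine (lintegral_mono (hpointwise ξ)).trans_eq ?_
    rw [lintegral_const_mul' _ _ ENNReal.ofReal_ne_top,
      lintegral_sub_left_add_self hint.aemeasurable.ennreal_ofReal]
  have hfin : K * (2 * I) ≠ ⊤ := ENNReal.mul_ne_top ENNReal.ofReal_ne_top
    (ENNReal.mul_ne_top (by simp) hint.lintegral_lt_top.ne)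
  refine ⟨(K * (2 * I)).toReal + 1, by positivity, fun ξ => (hbound ξ).trans ?_⟩
  exact (ENNReal.le_ofReal_iff_toReal_le hfin (by positivity)).2 (lt_add_one _).le

/-- If `ω : ℝⁿ → (0,∞)` is measurable, `1/ω ∈ L¹(ℝⁿ)` and `ω` satisfies the δ condition
(G) for some `0 < δ < 1`, then `ω^(1/(1-δ))` satisfies Beurling's condition (B):
`sup_ξ ∫ ω(ξ)^(1/(1-δ)) / (ω(ξ-η)^(1/(1-δ)) * ω(η)^(1/(1-δ))) dη < ∞`. -/
theorem beurling_of_deltaCondition_of_integrableInv {n : ℕ}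
    (ω : EuclideanSpace ℝ (Fin n) → ℝ) (δ : ℝ)
    (hω_pos : ∀ ξ, 0 < ω ξ) (hω_meas : Measurable ω)
    (hint : Integrable (fun ξ => (ω ξ)⁻¹) volume)
    (hδ₀ : 0 < δ) (hδ₁ : δ < 1)
    (hG : SatisfiesDeltaCondition ω δ) :
    ∃ C : ℝ, 0 < C ∧ ∀ ξ,
      (∫⁻ η, ENNReal.ofReal (ω ξ ^ (1 - δ)⁻¹ /
        (ω (ξ - η) ^ (1 - δ)⁻¹ * ω η ^ (1 - δ)⁻¹)) ∂volume) ≤ ENNReal.ofReal C :=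
  beurling_of_deltaCondition_of_integrableInv_general ω δ hω_pos hint hδ₁ hG
end

section
/- Let M = (m₁,…,mₙ) ∈ ℕⁿ with each mⱼ ≥ 1 and set m_* = min_{1≤j≤n} mⱼ. Then for every s > n/m_*, the power ⟨·⟩_M^s of the quasi-homogeneous weight satisfies Beurling's condition (B): sup_{ξ∈ℝⁿ} ∫_{ℝⁿ} ⟨ξ⟩_M^s/(⟨ξ−η⟩_M^s ⟨η⟩_M^s) dη < ∞. -/
/-!
Since `⟨ξ⟩² ≤ 1 + Σ 4^{m_j} ((ξ-η)_j^{2m_j} + η_j^{2m_j})`, the weight is quasi-submultiplicative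
in the form `⟨ξ⟩ ≤ c · max (⟨ξ-η⟩, ⟨η⟩)`. For any such weight `v`,
`v ξ / (v (ξ-η) v η) ≤ c / min (v (ξ-η), v η) ≤ c (1 / v (ξ-η) + 1 / v η)`, and by translation
invariance of Lebesgue measure the integral over `η` is at most `2c ∫ 1/v`. Finally
`(1 + |η|²)^{m_*} ≲ ⟨η⟩²`, so `⟨η⟩^{-s} ≲ (1 + |η|²)^{-m_* s/2}`, which is integrable for
`m_* s > n`.
-/

open MeasureTheory

/-- The quasi-homogeneous weight `⟨ξ⟩_M = (1 + Σ_j ξ_j^(2 m_j))^(1/2)` on `ℝⁿ`. -/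
noncomputable def quasiHomWeight {n : ℕ} (M : Fin n → ℕ) (ξ : EuclideanSpace ℝ (Fin n)) : ℝ :=
  Real.sqrt (1 + ∑ j, ξ j ^ (2 * M j))

lemma add_pow_two_mul_le (a b : ℝ) (m : ℕ) :
    (a + b) ^ (2 * m) ≤ 4 ^ m * (a ^ (2 * m) + b ^ (2 * m)) := by
  have h2m := even_two_mul m
  rw [← h2m.pow_abs, ← h2m.pow_abs a, ← h2m.pow_abs b]
  calc |a + b| ^ (2 * m) ≤ (|a| + |b|) ^ (2 * m) := by gcongr; exact abs_add_le a b
    _ ≤ 2 ^ (2 * m - 1) * (|a| ^ (2 * m) + |b| ^ (2 * m)) :=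
      add_pow_le (abs_nonneg a) (abs_nonneg b) _
    _ ≤ 4 ^ m * (|a| ^ (2 * m) + |b| ^ (2 * m)) := by
      rw [show (4 : ℝ) ^ m = 2 ^ (2 * m) by rw [pow_mul]; norm_num]
      gcongr
      · norm_num
      · omega

lemma div_mul_le_mul_inv_add_inv {w a b c : ℝ} (ha : 0 < a) (hb : 0 < b) (hc : 0 ≤ c)
    (h : w ≤ c * max a b) : w / (a * b) ≤ c * (a⁻¹ + b⁻¹) := by
  rcases le_total a b with hab | hab
  · rw [max_eq_right hab] at h
    calc w / (a * b) ≤ c * b / (a * b) := by gcongr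
      _ = c * a⁻¹ := by field_simp
      _ ≤ c * (a⁻¹ + b⁻¹) := by gcongr; linarith [inv_pos.2 hb]
  · rw [max_eq_left hab] at h
    calc w / (a * b) ≤ c * a / (a * b) := by gcongr
      _ = c * b⁻¹ := by field_simp
      _ ≤ c * (a⁻¹ + b⁻¹) := by gcongr; linarith [inv_pos.2 ha]

theorem lintegral_ofReal_div_mul_le_of_le_mul_max {G : Type*} [AddGroup G] [MeasurableSpace G]
    [MeasurableAdd G] [MeasurableNeg G] (μ : Measure G) [μ.IsAddLeftInvariant] [μ.IsNegInvariant]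
    {v : G → ℝ} {C : ℝ} (hv : ∀ x, 0 < v x) (hmeas : Measurable v) (hC : 0 ≤ C)
    (hmax : ∀ x y, v (x + y) ≤ C * max (v x) (v y)) (ξ : G) :
    ∫⁻ η, ENNReal.ofReal (v ξ / (v (ξ - η) * v η)) ∂μ ≤
      2 * ENNReal.ofReal C * ∫⁻ η, ENNReal.ofReal (v η)⁻¹ ∂μ := by
  have hpt (η : G) : ENNReal.ofReal (v ξ / (v (ξ - η) * v η)) ≤
      ENNReal.ofReal C * ENNReal.ofReal (v (ξ - η))⁻¹ +
        ENNReal.ofReal C * ENNReal.ofReal (v η)⁻¹ := by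
    have := div_mul_le_mul_inv_add_inv (hv (ξ - η)) (hv η) hC (by simpa using hmax (ξ - η) η)
    rw [← ENNReal.ofReal_mul hC, ← ENNReal.ofReal_mul hC, ← ENNReal.ofReal_add
      (mul_nonneg hC (inv_pos.2 (hv _)).le) (mul_nonneg hC (inv_pos.2 (hv _)).le), ← mul_add]
    exact ENNReal.ofReal_le_ofReal this
  calc ∫⁻ η, ENNReal.ofReal (v ξ / (v (ξ - η) * v η)) ∂μ
      ≤ ∫⁻ η, (ENNReal.ofReal C * ENNReal.ofReal (v (ξ - η))⁻¹ +
          ENNReal.ofReal C * ENNReal.ofReal (v η)⁻¹) ∂μ := lintegral_mono hpt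
    _ = ENNReal.ofReal C * ∫⁻ η, ENNReal.ofReal (v (ξ - η))⁻¹ ∂μ +
          ENNReal.ofReal C * ∫⁻ η, ENNReal.ofReal (v η)⁻¹ ∂μ := by
      rw [lintegral_add_left (by fun_prop), lintegral_const_mul _ (by fun_prop),
        lintegral_const_mul _ (by fun_prop)]
    _ = 2 * ENNReal.ofReal C * ∫⁻ η, ENNReal.ofReal (v η)⁻¹ ∂μ := by
      rw [lintegral_sub_left_eq_self (fun η => ENNReal.ofReal (v η)⁻¹) ξ]; ring

lemma pow_le_one_add_pow_of_le {t : ℝ} (ht : 0 ≤ t) {k l : ℕ} (hkl : k ≤ l) :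
    t ^ k ≤ 1 + t ^ l := by
  rcases le_total t 1 with ht1 | ht1
  · linarith [pow_le_one₀ ht ht1 (n := k), pow_nonneg ht l]
  · linarith [pow_le_pow_right₀ ht1 hkl]

section QuasiHomWeight

variable {n : ℕ} (M : Fin n → ℕ)

lemma sum_pow_two_mul_nonneg (x : EuclideanSpace ℝ (Fin n)) : 0 ≤ ∑ j, x j ^ (2 * M j) :=
  Finset.sum_nonneg fun j _ => (even_two_mul (M j)).pow_nonneg (x j)

lemma quasiHomWeight_sq (x : EuclideanSpace ℝ (Fin n)) :
    quasiHomWeight M x ^ 2 = 1 + ∑ j, x j ^ (2 * M j) :=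
  Real.sq_sqrt (by linarith [sum_pow_two_mul_nonneg M x])

lemma one_le_quasiHomWeight (x : EuclideanSpace ℝ (Fin n)) : 1 ≤ quasiHomWeight M x :=
  Real.one_le_sqrt.2 (by linarith [sum_pow_two_mul_nonneg M x])

lemma quasiHomWeight_pos (x : EuclideanSpace ℝ (Fin n)) : 0 < quasiHomWeight M x :=
  zero_lt_one.trans_le (one_le_quasiHomWeight M x)

lemma continuous_quasiHomWeight : Continuous (quasiHomWeight M) := by
  unfold quasiHomWeight; fun_prop

lemma quasiHomWeight_add_le {K : ℕ} (hK : ∀ j, M j ≤ K) (x y : EuclideanSpace ℝ (Fin n)) :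
    quasiHomWeight M (x + y) ≤ 2 ^ (K + 1) * max (quasiHomWeight M x) (quasiHomWeight M y) := by
  have hsum : ∑ j, (x + y) j ^ (2 * M j) ≤
      4 ^ K * (∑ j, x j ^ (2 * M j) + ∑ j, y j ^ (2 * M j)) := by
    rw [← Finset.sum_add_distrib, Finset.mul_sum]
    gcongr with j
    calc (x + y) j ^ (2 * M j) ≤ 4 ^ M j * (x j ^ (2 * M j) + y j ^ (2 * M j)) :=
          add_pow_two_mul_le _ _ _
      _ ≤ 4 ^ K * (x j ^ (2 * M j) + y j ^ (2 * M j)) := by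
          gcongr
          · exact add_nonneg ((even_two_mul _).pow_nonneg _) ((even_two_mul _).pow_nonneg _)
          · norm_num
          · exact hK j
  have hmax : quasiHomWeight M x ^ 2 + quasiHomWeight M y ^ 2 ≤
      2 * max (quasiHomWeight M x) (quasiHomWeight M y) ^ 2 := by
    have := one_le_quasiHomWeight M x
    have := one_le_quasiHomWeight M y
    rw [two_mul]
    gcongr <;> simp
  have h4K : (1 : ℝ) ≤ 4 ^ K := one_le_pow₀ (by norm_num)
  have hmax0 : 0 ≤ max (quasiHomWeight M x) (quasiHomWeight M y) :=
    (quasiHomWeight_pos M x).le.trans (le_max_left _ _)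
  refine le_of_sq_le_sq ?_ (by positivity)
  calc quasiHomWeight M (x + y) ^ 2
      ≤ 4 ^ K * (quasiHomWeight M x ^ 2 + quasiHomWeight M y ^ 2) := by
        rw [quasiHomWeight_sq, quasiHomWeight_sq, quasiHomWeight_sq]
        nlinarith [sum_pow_two_mul_nonneg M x]
    _ ≤ 4 ^ K * (2 * max (quasiHomWeight M x) (quasiHomWeight M y) ^ 2) := by gcongr
    _ ≤ (2 ^ (K + 1) * max (quasiHomWeight M x) (quasiHomWeight M y)) ^ 2 := by
        rw [mul_pow, ← pow_mul, pow_mul', show (2 : ℝ) ^ 2 = 4 by norm_num, pow_succ (4 : ℝ) K]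
        nlinarith [sq_nonneg (max (quasiHomWeight M x) (quasiHomWeight M y))]

lemma quasiHomWeight_rpow_add_le {K : ℕ} (hK : ∀ j, M j ≤ K) {s : ℝ} (hs : 0 ≤ s)
    (x y : EuclideanSpace ℝ (Fin n)) :
    quasiHomWeight M (x + y) ^ s ≤
      (2 ^ (K + 1)) ^ s * max (quasiHomWeight M x ^ s) (quasiHomWeight M y ^ s) := by
  have hx := (quasiHomWeight_pos M x).le
  have hy := (quasiHomWeight_pos M y).le
  calc quasiHomWeight M (x + y) ^ s
      ≤ (2 ^ (K + 1) * max (quasiHomWeight M x) (quasiHomWeight M y)) ^ s :=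
        Real.rpow_le_rpow (quasiHomWeight_pos M _).le
          (quasiHomWeight_add_le M hK x y) hs
    _ = (2 ^ (K + 1)) ^ s * max (quasiHomWeight M x ^ s) (quasiHomWeight M y ^ s) := by
        rw [Real.mul_rpow (by positivity) (hx.trans (le_max_left _ _))]
        rcases le_total (quasiHomWeight M x) (quasiHomWeight M y) with h | h
        · rw [max_eq_right h, max_eq_right (Real.rpow_le_rpow hx h hs)]
        · rw [max_eq_left h, max_eq_left (Real.rpow_le_rpow hy h hs)]

lemma one_add_norm_sq_pow_le {m : ℕ} (hm : ∀ j, m ≤ M j) (x : EuclideanSpace ℝ (Fin n)) :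
    (1 + ‖x‖ ^ 2) ^ m ≤ (n + 1) ^ m * quasiHomWeight M x ^ 2 := by
  have hw : 1 ≤ quasiHomWeight M x ^ 2 := one_le_pow₀ (one_le_quasiHomWeight M x)
  rcases m with _ | m
  · simpa using hw
  -- Jensen's inequality for the `n + 1` terms `1, x₁², …, xₙ²`.
  let f : Option (Fin n) → ℝ := fun o => o.elim 1 fun j => x j ^ 2
  have hf : ∀ o ∈ Finset.univ, 0 ≤ f o := by rintro (_ | j) _ <;> simp [f, sq_nonneg]
  calc (1 + ‖x‖ ^ 2) ^ (m + 1) = (∑ o, f o) ^ (m + 1) := by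
        simp [f, Fintype.sum_option, EuclideanSpace.real_norm_sq_eq]
    _ ≤ (n + 1) ^ m * ∑ o, f o ^ (m + 1) := by
        simpa using pow_sum_le_card_mul_sum_pow hf m
    _ ≤ (n + 1) ^ m * (1 + ∑ j, (1 + x j ^ (2 * M j))) := by
        simp only [Fintype.sum_option, f, Option.elim, one_pow]
        gcongr with j
        rw [pow_mul]
        exact pow_le_one_add_pow_of_le (sq_nonneg _) (hm j)
    _ = (n + 1) ^ m * (n + quasiHomWeight M x ^ 2) := by
        rw [quasiHomWeight_sq, Finset.sum_add_distrib]
        simp only [Finset.sum_const, Finset.card_univ, Fintype.card_fin, nsmul_eq_mul, mul_one]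
        ring
    _ ≤ (n + 1) ^ (m + 1) * quasiHomWeight M x ^ 2 := by
        rw [pow_succ ((n : ℝ) + 1) m, mul_assoc]
        gcongr
        nlinarith

lemma integrable_quasiHomWeight_rpow_neg {m : ℕ} (hm : ∀ j, m ≤ M j) {s : ℝ}
    (hs : (n : ℝ) < m * s) : Integrable (fun x => quasiHomWeight M x ^ (-s)) := by
  have hs0 : 0 ≤ s := by
    by_contra! h
    nlinarith [(Nat.cast_nonneg m : (0 : ℝ) ≤ m), (Nat.cast_nonneg n : (0 : ℝ) ≤ n)]
  have hN : (0 : ℝ) < n + 1 := by positivity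
  refine ((integrable_rpow_neg_one_add_norm_sq (E := EuclideanSpace ℝ (Fin n)) (μ := volume)
    (by rwa [finrank_euclideanSpace_fin])).const_mul (((n : ℝ) + 1) ^ (m * s / 2))).mono'
    ((continuous_quasiHomWeight M).rpow_const fun x =>
      Or.inl (quasiHomWeight_pos M x).ne').aestronglyMeasurable
    (Filter.Eventually.of_forall fun x => ?_)
  have hw := quasiHomWeight_pos M x
  have ha : 0 < 1 + ‖x‖ ^ 2 := by positivity
  have hgrowth : ((1 + ‖x‖ ^ 2) / (n + 1)) ^ m ≤ quasiHomWeight M x ^ 2 := by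
    rw [div_pow, div_le_iff₀ (by positivity), mul_comm]
    exact one_add_norm_sq_pow_le M hm x
  rw [Real.norm_of_nonneg (Real.rpow_nonneg hw.le _)]
  calc quasiHomWeight M x ^ (-s) = (quasiHomWeight M x ^ 2) ^ (-s / 2) := by
        rw [← Real.rpow_natCast_mul hw.le]; congr 1; ring
    _ ≤ (((1 + ‖x‖ ^ 2) / (n + 1)) ^ m) ^ (-s / 2) :=
        Real.rpow_le_rpow_of_nonpos (by positivity) hgrowth (by linarith)
    _ = ((n : ℝ) + 1) ^ (m * s / 2) * (1 + ‖x‖ ^ 2) ^ (-(m * s) / 2) := by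
        rw [← Real.rpow_natCast_mul (by positivity), Real.div_rpow ha.le hN.le,
          div_eq_mul_inv, ← Real.rpow_neg hN.le, mul_comm]
        ring_nf

end QuasiHomWeight

/-- For `s > n / m_*` (with `m_* = min_j m_j`), the power `⟨·⟩_M^s` of the
quasi-homogeneous weight satisfies Beurling's condition (B):
`sup_ξ ∫ ⟨ξ⟩_M^s / (⟨ξ-η⟩_M^s * ⟨η⟩_M^s) dη < ∞`. -/
theorem quasiHomWeight_pow_beurling {n : ℕ} (M : Fin n → ℕ) (mlow : ℕ) (s : ℝ)
    (hM : ∀ j, 1 ≤ M j) (hlow_le : ∀ j, mlow ≤ M j) (hlow_mem : ∃ j, M j = mlow)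
    (hs : (n : ℝ) / mlow < s) :
    ∃ C : ℝ, 0 < C ∧ ∀ ξ : EuclideanSpace ℝ (Fin n),
      (∫⁻ η, ENNReal.ofReal (quasiHomWeight M ξ ^ s /
        (quasiHomWeight M (ξ - η) ^ s * quasiHomWeight M η ^ s)) ∂volume) ≤
          ENNReal.ofReal C := by
  obtain ⟨j₀, rfl⟩ := hlow_mem
  have hs' : (n : ℝ) < M j₀ * s := by
    rwa [div_lt_iff₀' (by exact_mod_cast hM j₀)] at hs
  have hs0 : 0 ≤ s := (div_nonneg n.cast_nonneg (M j₀).cast_nonneg).trans hs.le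
  have hbound := lintegral_ofReal_div_mul_le_of_le_mul_max volume
    (fun x => Real.rpow_pos_of_pos (quasiHomWeight_pos M x) s)
    ((continuous_quasiHomWeight M).measurable.pow_const s) (by positivity)
    (quasiHomWeight_rpow_add_le M (fun j => Finset.le_sup (Finset.mem_univ j)) hs0)
  set B := 2 * ENNReal.ofReal ((2 ^ (Finset.univ.sup M + 1)) ^ s) *
    ∫⁻ η, ENNReal.ofReal (quasiHomWeight M η ^ s)⁻¹
  have hB : B ≠ ⊤ := by
    refine ENNReal.mul_ne_top (ENNReal.mul_ne_top ENNReal.ofNat_ne_top ENNReal.ofReal_ne_top) ?_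
    simp_rw [← Real.rpow_neg (quasiHomWeight_pos M _).le]
    exact (integrable_quasiHomWeight_rpow_neg M hlow_le hs').lintegral_lt_top.ne
  refine ⟨B.toReal + 1, by positivity, fun ξ => (hbound ξ).trans ?_⟩
  exact (ENNReal.le_ofReal_iff_toReal_le hB (by positivity)).2 (by linarith)
end

section
/- Let p, q ∈ [1,+∞] satisfy 1/p + 1/q = 1. Let f = f(ζ,η) be a measurable function on ℝⁿ×ℝⁿ with A := sup_{η∈ℝⁿ} ‖f(·,η)‖_{L^p(ℝⁿ)} < ∞, and let F = F(ζ,η) be measurable on ℝⁿ×ℝⁿ with B := sup_{ζ∈ℝⁿ} ‖F(ζ,·)‖_{L^q(ℝⁿ)} < ∞. Then for every g ∈ L^p(ℝⁿ) the function Tg(ξ) = ∫_{ℝⁿ} F(ξ,η) f(ξ−η,η) g(η) dη is well defined for almost every ξ, belongs to L^p(ℝⁿ), and satisfies ‖Tg‖_{L^p} ≤ A·B·‖g‖_{L^p}. -/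
/-!
Hölder's inequality in `η` bounds `|Tg(ξ)|` by `B · ‖η ↦ f(ξ - η, η) g(η)‖_p`, so it suffices to
bound the `L^p` norm in `ξ` of this inner norm by `A ‖g‖_p`. For `p < ∞`, Tonelli lets us integrate
first in `ξ`, where translation invariance turns `∫ |f(ξ - η, η)|^p dξ` into `‖f(·, η)‖_p^p ≤ A^p`.
For `p = ∞`, the same change of order and translation show that `|f(ξ - η, η)| ≤ A` for almost
every `(ξ, η)`.
-/

open MeasureTheory Function
open scoped ENNReal

theorem MeasureTheory.eLpNorm_rpow_toReal_eq_lintegral {α ε : Type*} [MeasurableSpace α]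
    [ENorm ε] {μ : Measure α} {p : ℝ≥0∞} (hp0 : p ≠ 0) (hp : p ≠ ∞) (f : α → ε) :
    eLpNorm f p μ ^ p.toReal = ∫⁻ x, ‖f x‖ₑ ^ p.toReal ∂μ := by
  rw [eLpNorm_eq_lintegral_rpow_enorm_toReal hp0 hp, one_div,
    ENNReal.rpow_inv_rpow (ENNReal.toReal_pos hp0 hp).ne']

theorem MeasureTheory.lintegral_enorm_mul_le_eLpNorm_mul_eLpNorm {α 𝕜 : Type*}
    [MeasurableSpace α] [NormedRing 𝕜] {μ : Measure α} {p q : ℝ≥0∞} [p.HolderConjugate q]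
    {u v : α → 𝕜} (hu : AEStronglyMeasurable u μ) (hv : AEStronglyMeasurable v μ) :
    ∫⁻ x, ‖u x * v x‖ₑ ∂μ ≤ eLpNorm u p μ * eLpNorm v q μ := by
  simpa [eLpNorm_one_eq_lintegral_enorm] using
    eLpNorm_le_eLpNorm_mul_eLpNorm_of_nnnorm (r := 1) hu hv (· * ·) 1
      (ae_of_all _ fun x => by simpa using nnnorm_mul_le (u x) (v x))

section Shear

variable {G 𝕜 : Type*} [MeasurableSpace G] [AddGroup G] [MeasurableSub₂ G]
  [NormedDivisionRing 𝕜] [MeasurableSpace 𝕜] [OpensMeasurableSpace 𝕜]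
  {μ ν : Measure G} {f : G → G → 𝕜} {g : G → 𝕜} {p : ℝ≥0∞}

theorem aemeasurable_shear_mul_enorm_rpow (hf : Measurable (uncurry f))
    (hg : AEStronglyMeasurable g ν) {r : ℝ} (hr : 0 ≤ r) :
    AEMeasurable (fun z : G × G => ‖f (z.1 - z.2) z.2 * g z.2‖ₑ ^ r) (μ.prod ν) := by
  simp_rw [enorm_mul, ENNReal.mul_rpow_of_nonneg _ _ hr]
  exact ((hf.comp ((measurable_fst.sub measurable_snd).prodMk measurable_snd)).enorm.pow_const
    r).aemeasurable.mul (hg.enorm.pow_const r).comp_snd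

variable [MeasurableAdd G] [SFinite μ] [SFinite ν] [μ.IsAddRightInvariant]

theorem ae_ae_sub_of_forall_ae {P : G → G → Prop} (hP : MeasurableSet {z : G × G | P z.1 z.2})
    (h : ∀ η, ∀ᵐ ζ ∂μ, P ζ η) : ∀ᵐ ξ ∂μ, ∀ᵐ η ∂ν, P (ξ - η) η := by
  refine (Measure.ae_ae_comm (p := fun ξ η => P (ξ - η) η)
    (hP.preimage ((measurable_fst.sub measurable_snd).prodMk measurable_snd))).2 ?_
  exact ae_of_all _ fun η => (measurePreserving_sub_right μ η).quasiMeasurePreserving.ae (h η)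

theorem ae_eLpNorm_top_shear_mul_le (hf : Measurable (uncurry f)) :
    ∀ᵐ ξ ∂μ, eLpNorm (fun η => f (ξ - η) η * g η) ∞ ν ≤
      (⨆ η, eLpNorm (fun ζ => f ζ η) ∞ μ) * eLpNorm g ∞ ν := by
  set A := ⨆ η, eLpNorm (fun ζ => f ζ η) ∞ μ
  have hf_le : ∀ᵐ ξ ∂μ, ∀ᵐ η ∂ν, ‖f (ξ - η) η‖ₑ ≤ A := by
    have hmeas : Measurable fun z : G × G => ‖f z.1 z.2‖ₑ := hf.enorm
    refine ae_ae_sub_of_forall_ae (P := fun ζ η => ‖f ζ η‖ₑ ≤ A)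
      (measurableSet_le hmeas measurable_const) fun η => ?_
    filter_upwards [ae_le_eLpNormEssSup (f := fun ζ => f ζ η) (μ := μ)] with ζ hζ
    exact hζ.trans (le_iSup_of_le η eLpNorm_exponent_top.ge)
  filter_upwards [hf_le] with ξ hξ
  rw [eLpNorm_exponent_top]
  refine eLpNormEssSup_le_of_ae_enorm_bound ?_
  filter_upwards [hξ, ae_le_eLpNormEssSup (f := g) (μ := ν)] with η hfη hgη
  rw [enorm_mul, eLpNorm_exponent_top]
  exact mul_le_mul' hfη hgη

theorem lintegral_lintegral_shear_mul_rpow_le (hp0 : p ≠ 0) (hp : p ≠ ∞)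
    (hf : Measurable (uncurry f)) (hg : AEStronglyMeasurable g ν) :
    ∫⁻ ξ, ∫⁻ η, ‖f (ξ - η) η * g η‖ₑ ^ p.toReal ∂ν ∂μ ≤
      ((⨆ η, eLpNorm (fun ζ => f ζ η) p μ) * eLpNorm g p ν) ^ p.toReal := by
  set r := p.toReal
  have hr : 0 ≤ r := ENNReal.toReal_nonneg
  have hshear : Measurable fun z : G × G => ‖f (z.1 - z.2) z.2‖ₑ ^ r :=
    (hf.comp ((measurable_fst.sub measurable_snd).prodMk measurable_snd)).enorm.pow_const r
  calc ∫⁻ ξ, ∫⁻ η, ‖f (ξ - η) η * g η‖ₑ ^ r ∂ν ∂μ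
      = ∫⁻ η, (∫⁻ ξ, ‖f (ξ - η) η‖ₑ ^ r ∂μ) * ‖g η‖ₑ ^ r ∂ν := by
        simp_rw [enorm_mul, ENNReal.mul_rpow_of_nonneg _ _ hr]
        rw [lintegral_lintegral_swap (hshear.aemeasurable.mul (hg.enorm.pow_const r).comp_snd)]
        exact lintegral_congr fun η =>
          lintegral_mul_const _ (hshear.comp (measurable_id.prodMk measurable_const))
    _ = ∫⁻ η, eLpNorm (fun ζ => f ζ η) p μ ^ r * ‖g η‖ₑ ^ r ∂ν := by
        refine lintegral_congr fun η => ?_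
        rw [lintegral_sub_right_eq_self (fun ζ => ‖f ζ η‖ₑ ^ r) η,
          eLpNorm_rpow_toReal_eq_lintegral hp0 hp]
    _ ≤ ∫⁻ η, (⨆ η, eLpNorm (fun ζ => f ζ η) p μ) ^ r * ‖g η‖ₑ ^ r ∂ν := by
        gcongr with η
        exact le_iSup (fun η => eLpNorm (fun ζ => f ζ η) p μ) η
    _ = _ := by
        rw [lintegral_const_mul'' _ (hg.enorm.pow_const r), ← eLpNorm_rpow_toReal_eq_lintegral hp0 hp,
          ENNReal.mul_rpow_of_nonneg _ _ hr]

theorem eLpNorm_eLpNorm_shear_mul_le (hf : Measurable (uncurry f))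
    (hg : AEStronglyMeasurable g ν) :
    eLpNorm (fun ξ => eLpNorm (fun η => f (ξ - η) η * g η) p ν) p μ ≤
      (⨆ η, eLpNorm (fun ζ => f ζ η) p μ) * eLpNorm g p ν := by
  rcases eq_or_ne p 0 with rfl | hp0
  · simp
  rcases eq_or_ne p ∞ with rfl | hp
  · rw [eLpNorm_exponent_top]
    exact eLpNormEssSup_le_of_ae_enorm_bound (ae_eLpNorm_top_shear_mul_le hf)
  have hr : 0 < p.toReal := ENNReal.toReal_pos hp0 hp
  rw [← ENNReal.rpow_le_rpow_iff hr, eLpNorm_rpow_toReal_eq_lintegral hp0 hp]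
  simp_rw [enorm_eq_self, eLpNorm_rpow_toReal_eq_lintegral hp0 hp]
  exact lintegral_lintegral_shear_mul_rpow_le hp0 hp hf hg

theorem ae_eLpNorm_shear_mul_lt_top (hf : Measurable (uncurry f)) (hg : MemLp g p ν)
    (hA : ⨆ η, eLpNorm (fun ζ => f ζ η) p μ < ∞) :
    ∀ᵐ ξ ∂μ, eLpNorm (fun η => f (ξ - η) η * g η) p ν < ∞ := by
  rcases eq_or_ne p ∞ with rfl | hp
  · filter_upwards [ae_eLpNorm_top_shear_mul_le (ν := ν) (g := g) hf] with ξ hξ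
    exact hξ.trans_lt (ENNReal.mul_lt_top hA hg.2)
  rcases eq_or_ne p 0 with rfl | hp0
  · simp
  have hr : 0 < p.toReal := ENNReal.toReal_pos hp0 hp
  have hmeas : AEMeasurable (fun ξ => ∫⁻ η, ‖f (ξ - η) η * g η‖ₑ ^ p.toReal ∂ν) μ :=
    (aemeasurable_shear_mul_enorm_rpow (μ := μ) hf hg.1 hr.le).lintegral_prod_right'
  have hfin := (lintegral_lintegral_shear_mul_rpow_le hp0 hp hf hg.1).trans_lt
    (ENNReal.rpow_lt_top_of_nonneg hr.le (ENNReal.mul_lt_top hA hg.2).ne)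
  filter_upwards [ae_lt_top' hmeas hfin.ne] with ξ hξ
  rwa [← eLpNorm_rpow_toReal_eq_lintegral hp0 hp, ENNReal.rpow_lt_top_iff_of_pos hr] at hξ

end Shear

section IntegralOperator

variable {α β 𝕜 : Type*} [MeasurableSpace α] [MeasurableSpace β] [NormedRing 𝕜]
  [NormedSpace ℝ 𝕜] {μ : Measure α} {ν : Measure β} {p q : ℝ≥0∞} [q.HolderConjugate p]
  {F k : α → β → 𝕜}

theorem eLpNorm_integral_mul_le (hF : ∀ ξ, AEStronglyMeasurable (F ξ) ν)
    (hk : ∀ ξ, AEStronglyMeasurable (k ξ) ν) (hB : ⨆ ξ, eLpNorm (F ξ) q ν ≠ ∞) :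
    eLpNorm (fun ξ => ∫ η, F ξ η * k ξ η ∂ν) p μ ≤
      (⨆ ξ, eLpNorm (F ξ) q ν) * eLpNorm (fun ξ => eLpNorm (k ξ) p ν) p μ := by
  refine ENNReal.coe_toNNReal hB ▸ eLpNorm_le_mul_eLpNorm_of_ae_le_mul' (ae_of_all _ fun ξ => ?_) p
  rw [ENNReal.coe_toNNReal hB, enorm_eq_self]
  calc ‖∫ η, F ξ η * k ξ η ∂ν‖ₑ ≤ ∫⁻ η, ‖F ξ η * k ξ η‖ₑ ∂ν := enorm_integral_le_lintegral_enorm _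
    _ ≤ eLpNorm (F ξ) q ν * eLpNorm (k ξ) p ν :=
        lintegral_enorm_mul_le_eLpNorm_mul_eLpNorm (hF ξ) (hk ξ)
    _ ≤ _ := mul_le_mul' (le_iSup (fun ξ => eLpNorm (F ξ) q ν) ξ) le_rfl

end IntegralOperator

theorem integralOperator_Lp_bound_general {n : ℕ} (p q : ℝ≥0∞)
    (hpq : p⁻¹ + q⁻¹ = 1)
    (f F : EuclideanSpace ℝ (Fin n) → EuclideanSpace ℝ (Fin n) → ℂ)
    (hf_meas : Measurable (Function.uncurry f))
    (hF_meas : Measurable (Function.uncurry F))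
    (hA : (⨆ η, eLpNorm (fun ζ => f ζ η) p volume) < ⊤)
    (hB : (⨆ ζ, eLpNorm (fun η => F ζ η) q volume) < ⊤)
    (g : EuclideanSpace ℝ (Fin n) → ℂ) (hg : MemLp g p volume) :
    (∀ᵐ ξ ∂volume, Integrable (fun η => F ξ η * f (ξ - η) η * g η) volume) ∧
    MemLp (fun ξ => ∫ η, F ξ η * f (ξ - η) η * g η ∂volume) p volume ∧
    eLpNorm (fun ξ => ∫ η, F ξ η * f (ξ - η) η * g η ∂volume) p volume ≤
      (⨆ η, eLpNorm (fun ζ => f ζ η) p volume) *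
      (⨆ ζ, eLpNorm (fun η => F ζ η) q volume) * eLpNorm g p volume := by
  have : q.HolderConjugate p := ⟨by rw [inv_one, add_comm, hpq]⟩
  have hshear : Measurable fun z : EuclideanSpace ℝ (Fin n) × EuclideanSpace ℝ (Fin n) =>
      f (z.1 - z.2) z.2 := hf_meas.comp ((measurable_fst.sub measurable_snd).prodMk measurable_snd)
  have hFξ ξ : MemLp (F ξ) q volume :=
    ⟨(hF_meas.comp measurable_prodMk_left).aestronglyMeasurable, (le_iSup _ ξ).trans_lt hB⟩
  have hkξ ξ : AEStronglyMeasurable (fun η => f (ξ - η) η * g η) volume :=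
    (hshear.comp measurable_prodMk_left).aestronglyMeasurable.mul hg.1
  have hbound := calc
    eLpNorm (fun ξ => ∫ η, F ξ η * (f (ξ - η) η * g η)) p volume
      ≤ (⨆ ζ, eLpNorm (F ζ) q volume) *
          eLpNorm (fun ξ => eLpNorm (fun η => f (ξ - η) η * g η) p volume) p volume :=
        eLpNorm_integral_mul_le (fun ξ => (hFξ ξ).1) hkξ hB.ne
    _ ≤ (⨆ ζ, eLpNorm (F ζ) q volume) *
          ((⨆ η, eLpNorm (fun ζ => f ζ η) p volume) * eLpNorm g p volume) :=
        mul_le_mul' le_rfl (eLpNorm_eLpNorm_shear_mul_le hf_meas hg.1)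
    _ = (⨆ η, eLpNorm (fun ζ => f ζ η) p volume) *
          (⨆ ζ, eLpNorm (F ζ) q volume) * eLpNorm g p volume := by ring
  simp only [mul_assoc (F _ _)]
  refine ⟨?_, ⟨?_, hbound.trans_lt (ENNReal.mul_lt_top (ENNReal.mul_lt_top hA hB) hg.2)⟩, hbound⟩
  · filter_upwards [ae_eLpNorm_shear_mul_lt_top hf_meas hg hA] with ξ hξ
    exact memLp_one_iff_integrable.1 (MemLp.mul' ⟨hkξ ξ, hξ⟩ (hFξ ξ))
  · exact (hF_meas.aestronglyMeasurable.mul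
      (hshear.aestronglyMeasurable.mul hg.1.comp_snd)).integral_prod_right'

/-- Boundedness on `L^p` of the integral operator
`Tg(ξ) = ∫ F(ξ,η) f(ξ-η,η) g(η) dη`, where `f ∈ 𝓛₁^{p,∞}` (i.e. `sup_η ‖f(·,η)‖_{L^p} < ∞`)
and `F ∈ 𝓛₂^{∞,q}` (i.e. `sup_ζ ‖F(ζ,·)‖_{L^q} < ∞`), with `1/p + 1/q = 1`:
for each `g ∈ L^p`, the integral defining `Tg` converges for a.e. `ξ`, `Tg ∈ L^p`, and
`‖Tg‖_{L^p} ≤ A * B * ‖g‖_{L^p}` where `A`, `B` are the above mixed norms. -/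
theorem integralOperator_Lp_bound {n : ℕ} (p q : ℝ≥0∞)
    (hp : 1 ≤ p) (hq : 1 ≤ q) (hpq : p⁻¹ + q⁻¹ = 1)
    (f F : EuclideanSpace ℝ (Fin n) → EuclideanSpace ℝ (Fin n) → ℂ)
    (hf_meas : Measurable (Function.uncurry f))
    (hF_meas : Measurable (Function.uncurry F))
    (hA : (⨆ η, eLpNorm (fun ζ => f ζ η) p volume) < ⊤)
    (hB : (⨆ ζ, eLpNorm (fun η => F ζ η) q volume) < ⊤)
    (g : EuclideanSpace ℝ (Fin n) → ℂ) (hg : MemLp g p volume) :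
    (∀ᵐ ξ ∂volume, Integrable (fun η => F ξ η * f (ξ - η) η * g η) volume) ∧
    MemLp (fun ξ => ∫ η, F ξ η * f (ξ - η) η * g η ∂volume) p volume ∧
    eLpNorm (fun ξ => ∫ η, F ξ η * f (ξ - η) η * g η ∂volume) p volume ≤
      (⨆ η, eLpNorm (fun ζ => f ζ η) p volume) *
      (⨆ ζ, eLpNorm (fun η => F ζ η) q volume) * eLpNorm g p volume :=
  integralOperator_Lp_bound_general p q hpq f F hf_meas hF_meas hA hB g hg
end

section
/- Let ω, ω₁, ω₂ be weight functions on ℝⁿ and q ∈ [1,+∞] such that C_q := sup_{ξ∈ℝⁿ} ‖ω(ξ)/(ω₁(ξ−·)ω₂(·))‖_{L^q(ℝⁿ)} < ∞, and let p ∈ [1,+∞] be the conjugate exponent of q (1/p + 1/q = 1). Then for all Schwartz functions f₁, f₂ on ℝⁿ one has ‖f₁ f₂‖_{FL^p_ω} ≤ (2π)^{−n} C_q ‖f₁‖_{FL^p_{ω₁}} ‖f₂‖_{FL^p_{ω₂}}. -/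
open MeasureTheory
open scoped ENNReal RealInnerProductSpace

/-- The temperance condition (T). -/
def IsTemperate {n : ℕ} (ω : EuclideanSpace ℝ (Fin n) → ℝ) : Prop :=
  ∃ C N : ℝ, 0 < C ∧ 0 < N ∧ ∀ ξ η, ω ξ ≤ C * (1 + ‖ξ - η‖) ^ N * ω η

/-- A weight function: positive, measurable and temperate. -/
def IsWeight {n : ℕ} (ω : EuclideanSpace ℝ (Fin n) → ℝ) : Prop :=
  (∀ ξ, 0 < ω ξ) ∧ Measurable ω ∧ IsTemperate ω

/-- The Fourier transform `f̂(ξ) = ∫ e^{-i x·ξ} f(x) dx`. -/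
noncomputable def fourierInt {n : ℕ} (f : EuclideanSpace ℝ (Fin n) → ℂ)
    (ξ : EuclideanSpace ℝ (Fin n)) : ℂ :=
  ∫ x, Complex.exp (-Complex.I * (⟪x, ξ⟫ : ℝ)) * f x

/-!
Up to the factor `(2π)^{-n}`, the Fourier transform of `f₁ f₂` is the convolution of `f̂₁` and
`f̂₂`. With `uᵢ = ωᵢ f̂ᵢ` and the kernel `K_ξ(η) = ω(ξ) / (ω₁(ξ - η) ω₂(η))` this reads
`ω(ξ) (f₁ f₂)^(ξ) = (2π)^{-n} ∫ K_ξ(η) u₁(ξ - η) u₂(η) dη`, so Hölder's inequality in `η` gives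
`|ω(ξ) (f₁ f₂)^(ξ)| ≤ (2π)^{-n} C_q ‖u₁(ξ - ·) u₂‖_p`. Taking the `L^p` norm in `ξ`, Tonelli and
translation invariance of Lebesgue measure give `‖ξ ↦ ‖u₁(ξ - ·) u₂‖_p‖_p ≤ ‖u₁‖_p ‖u₂‖_p`.
-/

open scoped NNReal SchwartzMap Convolution
open FourierTransform

theorem enorm_integral_smul_le_eLpNorm_mul_eLpNorm {α 𝕜 E : Type*} [MeasurableSpace α]
    {μ : Measure α} [NormedRing 𝕜] [NormedAddCommGroup E] [NormedSpace ℝ E]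
    [MulActionWithZero 𝕜 E] [IsBoundedSMul 𝕜 E] {p q : ℝ≥0∞} [q.HolderConjugate p]
    {φ : α → 𝕜} {g : α → E} (hφ : AEStronglyMeasurable φ μ) (hg : AEStronglyMeasurable g μ) :
    ‖∫ x, φ x • g x ∂μ‖ₑ ≤ eLpNorm φ q μ * eLpNorm g p μ := by
  refine (enorm_integral_le_lintegral_enorm _).trans ?_
  rw [← eLpNorm_one_eq_lintegral_enorm]
  exact eLpNorm_smul_le_mul_eLpNorm hg hφ

section Translation

variable {G : Type*} [AddCommGroup G] [MeasurableSpace G] [MeasurableAdd₂ G] [MeasurableNeg G]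
  {μ : Measure G} [SFinite μ] [μ.IsAddLeftInvariant]

theorem lintegral_lintegral_sub_mul {f g : G → ℝ≥0∞} (hf : AEMeasurable f μ)
    (hg : AEMeasurable g μ) :
    ∫⁻ ξ, ∫⁻ η, f (ξ - η) * g η ∂μ ∂μ = (∫⁻ ξ, f ξ ∂μ) * ∫⁻ η, g η ∂μ := by
  have hprod : AEMeasurable (fun z : G × G => f (z.1 - z.2) * g z.2) (μ.prod μ) :=
    (hf.comp_quasiMeasurePreserving (quasiMeasurePreserving_sub μ μ)).mul hg.comp_snd
  rw [lintegral_lintegral_swap hprod]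
  calc ∫⁻ η, ∫⁻ ξ, f (ξ - η) * g η ∂μ ∂μ = ∫⁻ η, (∫⁻ ξ, f (ξ - η) ∂μ) * g η ∂μ :=
        lintegral_congr fun η => lintegral_mul_const'' _ <|
          hf.comp_quasiMeasurePreserving (measurePreserving_sub_right μ η).quasiMeasurePreserving
    _ = (∫⁻ ξ, f ξ ∂μ) * ∫⁻ η, g η ∂μ := by
        simp_rw [lintegral_sub_right_eq_self f]
        exact lintegral_const_mul'' _ hg

variable [μ.IsNegInvariant] {𝕜 : Type*} [NormedDivisionRing 𝕜] {u₁ u₂ : G → 𝕜}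

theorem eLpNorm_eLpNorm_sub_mul_le (hu₁ : AEStronglyMeasurable u₁ μ)
    (hu₂ : AEStronglyMeasurable u₂ μ) (p : ℝ≥0∞) :
    eLpNorm (fun ξ => eLpNorm (fun η => u₁ (ξ - η) * u₂ η) p μ) p μ ≤
      eLpNorm u₁ p μ * eLpNorm u₂ p μ := by
  rcases eq_or_ne p 0 with rfl | hp0
  · simp
  rcases eq_or_ne p ∞ with rfl | hptop
  · rw [eLpNorm_exponent_top]
    refine essSup_le_of_ae_le _ (.of_forall fun ξ => ?_)
    have htranslate : eLpNorm (fun η => u₁ (ξ - η)) ∞ μ = eLpNorm u₁ ∞ μ :=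
      eLpNorm_comp_measurePreserving hu₁ (Measure.measurePreserving_sub_left μ ξ)
    simp only [enorm_eq_self]
    rw [← htranslate]
    exact eLpNorm_smul_le_eLpNorm_top_mul_eLpNorm ∞ hu₂ (fun η => u₁ (ξ - η))
  · have hr : 0 < p.toReal := ENNReal.toReal_pos hp0 hptop
    simp only [eLpNorm_eq_eLpNorm' hp0 hptop, eLpNorm', enorm_eq_self, one_div]
    rw [← ENNReal.mul_rpow_of_nonneg _ _ (by positivity)]
    refine le_of_eq (congrArg (· ^ p.toReal⁻¹) ?_)
    simp_rw [ENNReal.rpow_inv_rpow hr.ne', enorm_mul, ENNReal.mul_rpow_of_nonneg _ _ hr.le]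
    exact lintegral_lintegral_sub_mul (hu₁.enorm.pow_const _) (hu₂.enorm.pow_const _)

end Translation

open SchwartzMap ContinuousLinearMap in
theorem SchwartzMap.fourier_mul_eq_convolution {V : Type*} [NormedAddCommGroup V]
    [InnerProductSpace ℝ V] [FiniteDimensional ℝ V] [MeasurableSpace V] [BorelSpace V]
    (f g : 𝓢(V, ℂ)) :
    𝓕 (fun x => f x * g x) = 𝓕 (f : V → ℂ) ⋆[mul ℂ ℂ] 𝓕 (g : V → ℂ) := by
  -- `𝓕 ∘ 𝓕` is the reflection `u ↦ u (-·)`, so `𝓕⁻ (𝓕 f ⋆ 𝓕 g) = f g`.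
  have hinv : pairing (mul ℂ ℂ) f g = 𝓕⁻ (convolution (mul ℂ ℂ) (𝓕 f) (𝓕 g)) := by
    ext x
    have fourier_fourier_neg (u : 𝓢(V, ℂ)) : 𝓕 (𝓕 u) (-x) = u x := by
      rw [fourier_coe (𝓕 u), ← Real.fourierInv_eq_fourier_neg, ← fourierInv_coe,
        fourierInv_fourier_eq]
    rw [fourierInv_coe, Real.fourierInv_eq_fourier_neg, ← fourier_coe, fourier_convolution,
      pairing_apply_apply, pairing_apply_apply, fourier_fourier_neg, fourier_fourier_neg]
  ext ξ
  rw [← fourier_coe, ← fourier_coe, ← convolution_apply,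
    ← fourier_fourierInv_eq (F := 𝓢(V, ℂ)) (convolution (mul ℂ ℂ) (𝓕 f) (𝓕 g)), ← hinv]
  rfl

section FourierInt

variable {n : ℕ}

local notation "𝕍" => EuclideanSpace ℝ (Fin n)

theorem fourierInt_eq_fourier (f : 𝕍 → ℂ) :
    fourierInt f = fun ξ => 𝓕 f ((2 * Real.pi)⁻¹ • ξ) := by
  ext ξ
  rw [Real.fourier_eq']
  refine integral_congr_ae (.of_forall fun v => ?_)
  simp only [smul_eq_mul, real_inner_smul_right]
  congr 2
  push_cast
  field_simp

theorem continuous_fourierInt (f : 𝓢(𝕍, ℂ)) : Continuous (fourierInt f) := by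
  rw [fourierInt_eq_fourier, ← SchwartzMap.fourier_coe]
  fun_prop

theorem fourierInt_mul (f₁ f₂ : 𝓢(𝕍, ℂ)) (ξ : 𝕍) :
    fourierInt (fun x => f₁ x * f₂ x) ξ =
      ((2 * Real.pi) ^ n)⁻¹ • ∫ η, fourierInt f₁ (ξ - η) * fourierInt f₂ η := by
  set s := (2 * Real.pi)⁻¹
  let g : 𝕍 → ℂ := fun t => 𝓕 (f₁ : 𝕍 → ℂ) (s • ξ - t) * 𝓕 (f₂ : 𝕍 → ℂ) t
  have hrescale : ∫ η, fourierInt f₁ (ξ - η) * fourierInt f₂ η = ∫ η, g (s • η) := by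
    simp only [fourierInt_eq_fourier, g, smul_sub]
    rfl
  have hconv : ∫ t, g t = 𝓕 (fun x => f₁ x * f₂ x) (s • ξ) := by
    rw [SchwartzMap.fourier_mul_eq_convolution, convolution_eq_swap]
    rfl
  have hjacobian : ((2 * Real.pi) ^ n)⁻¹ * |(s ^ n)⁻¹| = 1 := by
    rw [inv_pow, inv_inv, abs_of_pos (by positivity), inv_mul_cancel₀ (by positivity)]
  rw [hrescale, Measure.integral_comp_smul, finrank_euclideanSpace_fin, smul_smul, hconv,
    fourierInt_eq_fourier, hjacobian, one_smul]

noncomputable def weightedFourier (ω : 𝕍 → ℝ) (f : 𝕍 → ℂ) : 𝕍 → ℂ :=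
  fun ξ => (ω ξ : ℂ) * fourierInt f ξ

theorem measurable_weightedFourier {ω : 𝕍 → ℝ} (hω : Measurable ω) (f : 𝓢(𝕍, ℂ)) :
    Measurable (weightedFourier ω f) :=
  (Complex.measurable_ofReal.comp hω).mul (continuous_fourierInt f).measurable

theorem enorm_mul_fourierInt_mul_le {p q : ℝ≥0∞} [q.HolderConjugate p] (ω : 𝕍 → ℝ)
    {ω₁ ω₂ : 𝕍 → ℝ} (hω₁ : ∀ ξ, ω₁ ξ ≠ 0) (hω₂ : ∀ ξ, ω₂ ξ ≠ 0) (hm₁ : Measurable ω₁)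
    (hm₂ : Measurable ω₂) (f₁ f₂ : 𝓢(𝕍, ℂ)) (ξ : 𝕍) :
    ‖(ω ξ : ℂ) * fourierInt (fun x => f₁ x * f₂ x) ξ‖ₑ ≤
      ENNReal.ofReal ((2 * Real.pi) ^ n)⁻¹ *
        eLpNorm (fun η => ω ξ / (ω₁ (ξ - η) * ω₂ η)) q volume *
        eLpNorm (fun η => weightedFourier ω₁ f₁ (ξ - η) * weightedFourier ω₂ f₂ η) p volume := by
  have hrepr : (ω ξ : ℂ) * fourierInt (fun x => f₁ x * f₂ x) ξ = ((2 * Real.pi) ^ n)⁻¹ •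
      ∫ η, (ω ξ / (ω₁ (ξ - η) * ω₂ η)) •
        (weightedFourier ω₁ f₁ (ξ - η) * weightedFourier ω₂ f₂ η) := by
    rw [fourierInt_mul, mul_smul_comm, ← integral_const_mul]
    congr 2 with η
    have : (ω₁ (ξ - η) : ℂ) ≠ 0 := by exact_mod_cast hω₁ (ξ - η)
    have : (ω₂ η : ℂ) ≠ 0 := by exact_mod_cast hω₂ η
    simp only [weightedFourier, Complex.real_smul]
    push_cast
    field_simp
  have hkernel : Measurable fun η => ω ξ / (ω₁ (ξ - η) * ω₂ η) :=
    measurable_const.div ((hm₁.comp (measurable_const.sub measurable_id)).mul hm₂)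
  have hproduct : Measurable fun η => weightedFourier ω₁ f₁ (ξ - η) * weightedFourier ω₂ f₂ η :=
    ((measurable_weightedFourier hm₁ f₁).comp (measurable_const.sub measurable_id)).mul
      (measurable_weightedFourier hm₂ f₂)
  rw [hrepr, enorm_smul, Real.enorm_of_nonneg (by positivity), mul_assoc]
  gcongr
  exact enorm_integral_smul_le_eLpNorm_mul_eLpNorm hkernel.aestronglyMeasurable
    hproduct.aestronglyMeasurable

end FourierInt

theorem fourierLebesgue_product_estimate_general {n : ℕ}
    (ω ω₁ ω₂ : EuclideanSpace ℝ (Fin n) → ℝ)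
    (hω₁ : IsWeight ω₁) (hω₂ : IsWeight ω₂)
    (p q : ℝ≥0∞) (hpq : p⁻¹ + q⁻¹ = 1)
    (hCq : (⨆ ξ, eLpNorm (fun η => ω ξ / (ω₁ (ξ - η) * ω₂ η)) q volume) < ⊤)
    (f₁ f₂ : SchwartzMap (EuclideanSpace ℝ (Fin n)) ℂ) :
    eLpNorm (fun ξ => (ω ξ : ℂ) * fourierInt (fun x => f₁ x * f₂ x) ξ) p volume ≤
      ENNReal.ofReal (((2 * Real.pi) ^ n)⁻¹) *
      (⨆ ξ, eLpNorm (fun η => ω ξ / (ω₁ (ξ - η) * ω₂ η)) q volume) *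
      eLpNorm (fun ξ => (ω₁ ξ : ℂ) * fourierInt (fun x => f₁ x) ξ) p volume *
      eLpNorm (fun ξ => (ω₂ ξ : ℂ) * fourierInt (fun x => f₂ x) ξ) p volume := by
  obtain ⟨hpos₁, hm₁, -⟩ := hω₁
  obtain ⟨hpos₂, hm₂, -⟩ := hω₂
  have : q.HolderConjugate p := ENNReal.holderConjugate_iff.2 (by rw [add_comm, hpq])
  obtain ⟨C, hC⟩ : ∃ C : ℝ≥0,
      C = ⨆ ξ, eLpNorm (fun η => ω ξ / (ω₁ (ξ - η) * ω₂ η)) q volume :=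
    ⟨_, ENNReal.coe_toNNReal hCq.ne⟩
  set k : ℝ≥0 := ((2 * Real.pi) ^ n)⁻¹.toNNReal * C with hk
  have hpointwise (ξ) : ‖(ω ξ : ℂ) * fourierInt (fun x => f₁ x * f₂ x) ξ‖ₑ ≤
      k * ‖eLpNorm (fun η => weightedFourier ω₁ f₁ (ξ - η) * weightedFourier ω₂ f₂ η)
        p volume‖ₑ := by
    refine (enorm_mul_fourierInt_mul_le (p := p) (q := q) ω (fun ξ => (hpos₁ ξ).ne')
      (fun ξ => (hpos₂ ξ).ne') hm₁ hm₂ f₁ f₂ ξ).trans ?_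
    rw [enorm_eq_self, hk, ENNReal.coe_mul, hC, ENNReal.ofReal]
    gcongr
    exact le_iSup (fun ξ => eLpNorm (fun η => ω ξ / (ω₁ (ξ - η) * ω₂ η)) q volume) ξ
  calc _ ≤ k • eLpNorm (fun ξ => eLpNorm
          (fun η => weightedFourier ω₁ f₁ (ξ - η) * weightedFourier ω₂ f₂ η) p volume) p volume :=
        eLpNorm_le_nnreal_smul_eLpNorm_of_ae_le_mul' (.of_forall hpointwise) p
    _ ≤ k • (eLpNorm (weightedFourier ω₁ f₁) p volume *
          eLpNorm (weightedFourier ω₂ f₂) p volume) := by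
        gcongr
        exact eLpNorm_eLpNorm_sub_mul_le (measurable_weightedFourier hm₁ f₁).aestronglyMeasurable
          (measurable_weightedFourier hm₂ f₂).aestronglyMeasurable p
    _ = _ := by
        rw [ENNReal.smul_def, smul_eq_mul, hk, ENNReal.coe_mul, hC, ← mul_assoc]
        rfl

/-- If `C_q = sup_ξ ‖ω(ξ)/(ω₁(ξ-·) ω₂(·))‖_{L^q} < ∞` and `1/p + 1/q = 1`, then for all
Schwartz functions `f₁, f₂`: `‖f₁ f₂‖_{FL^p_ω} ≤ (2π)^{-n} C_q ‖f₁‖_{FL^p_{ω₁}} ‖f₂‖_{FL^p_{ω₂}}`. -/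
theorem fourierLebesgue_product_estimate {n : ℕ}
    (ω ω₁ ω₂ : EuclideanSpace ℝ (Fin n) → ℝ)
    (hω : IsWeight ω) (hω₁ : IsWeight ω₁) (hω₂ : IsWeight ω₂)
    (p q : ℝ≥0∞) (hp : 1 ≤ p) (hq : 1 ≤ q) (hpq : p⁻¹ + q⁻¹ = 1)
    (hCq : (⨆ ξ, eLpNorm (fun η => ω ξ / (ω₁ (ξ - η) * ω₂ η)) q volume) < ⊤)
    (f₁ f₂ : SchwartzMap (EuclideanSpace ℝ (Fin n)) ℂ) :
    eLpNorm (fun ξ => (ω ξ : ℂ) * fourierInt (fun x => f₁ x * f₂ x) ξ) p volume ≤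
      ENNReal.ofReal (((2 * Real.pi) ^ n)⁻¹) *
      (⨆ ξ, eLpNorm (fun η => ω ξ / (ω₁ (ξ - η) * ω₂ η)) q volume) *
      eLpNorm (fun ξ => (ω₁ ξ : ℂ) * fourierInt (fun x => f₁ x) ξ) p volume *
      eLpNorm (fun ξ => (ω₂ ξ : ℂ) * fourierInt (fun x => f₂ x) ξ) p volume :=
  fourierLebesgue_product_estimate_general ω ω₁ ω₂ hω₁ hω₂ p q hpq hCq f₁ f₂
end

section
/- Let ω, ω₁, ω₂ be weight functions on ℝⁿ satisfying sup_{ξ∈ℝⁿ} ‖ω(ξ)/(ω₁(ξ−·)ω₂(·))‖_{L^q(ℝⁿ)} < ∞ for some 1 ≤ q < +∞. Then there exists a constant C > 0 such that ω(η+θ) ≤ C ω₁(η) ω₂(θ) for all η, θ ∈ ℝⁿ. In particular, if a weight function ω satisfies sup_{ξ∈ℝⁿ} ‖ω(ξ)/(ω(ξ−·)ω(·))‖_{L^q(ℝⁿ)} < ∞ for some 1 ≤ q < +∞, then ω satisfies the sub-multiplicative condition (SM). -/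
open MeasureTheory
open scoped ENNReal

/-! Temperance makes `ω₁(ξ - y) ω₂(y)` comparable to `ω₁(η) ω₂(θ)` for `y` in the unit ball
around `θ`, where `ξ = η + θ`. On that ball the quotient `ω(ξ) / (ω₁(ξ - y) ω₂(y))` is therefore
bounded below by a fixed multiple of `ω(ξ) / (ω₁(η) ω₂(θ))`, so its `L^q` norm, bounded by
hypothesis uniformly in `ξ`, dominates that ratio times `|B(0,1)|^{1/q}`. -/

theorem IsWeight.exists_le_mul_of_norm_sub_le_one {n : ℕ} {ω : EuclideanSpace ℝ (Fin n) → ℝ}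
    (hω : IsWeight ω) : ∃ A, 0 < A ∧ ∀ ξ η, ‖ξ - η‖ ≤ 1 → ω ξ ≤ A * ω η := by
  obtain ⟨hpos, -, C, N, hC, hN, hT⟩ := hω
  refine ⟨C * 2 ^ N, by positivity, fun ξ η h => (hT ξ η).trans ?_⟩
  have : (1 + ‖ξ - η‖) ^ N ≤ (2 : ℝ) ^ N := by gcongr; linarith
  gcongr
  exact (hpos η).le

theorem ofReal_mul_measure_rpow_le_eLpNorm {α E : Type*} [MeasurableSpace α]
    [NormedAddCommGroup E] {μ : Measure α} {p : ℝ≥0∞} (hp0 : p ≠ 0) (hp : p ≠ ∞) {s : Set α}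
    (hs : MeasurableSet s) {f : α → E} {c : ℝ} (hc : ∀ x ∈ s, c ≤ ‖f x‖) :
    ENNReal.ofReal c * μ s ^ (1 / p.toReal) ≤ eLpNorm f p μ := by
  rcases le_or_gt c 0 with hc0 | hc0
  · simp [ENNReal.ofReal_of_nonpos hc0]
  calc ENNReal.ofReal c * μ s ^ (1 / p.toReal) = eLpNorm (s.indicator fun _ => c) p μ := by
        rw [eLpNorm_indicator_const hs hp0 hp, Real.enorm_of_nonneg hc0.le]
    _ ≤ eLpNorm f p μ := eLpNorm_mono fun x => by
        by_cases hx : x ∈ s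
        · simpa [hx, abs_of_pos hc0] using hc x hx
        · simp [hx]

section

variable {n : ℕ} {ω₁ ω₂ : EuclideanSpace ℝ (Fin n) → ℝ} {A₁ A₂ : ℝ}

theorem apply_sub_mul_apply_le_of_mem_ball
    (h₁ : ∀ ξ η, ‖ξ - η‖ ≤ 1 → ω₁ ξ ≤ A₁ * ω₁ η) (h₂ : ∀ ξ η, ‖ξ - η‖ ≤ 1 → ω₂ ξ ≤ A₂ * ω₂ η)
    (hA₁ : 0 ≤ A₁) (hpos₁ : ∀ ξ, 0 ≤ ω₁ ξ) (hpos₂ : ∀ ξ, 0 ≤ ω₂ ξ)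
    {η θ y : EuclideanSpace ℝ (Fin n)} (hy : y ∈ Metric.ball θ 1) :
    ω₁ (η + θ - y) * ω₂ y ≤ A₁ * A₂ * (ω₁ η * ω₂ θ) := by
  have hy' : ‖y - θ‖ ≤ 1 := (mem_ball_iff_norm.1 hy).le
  have hle₁ : ω₁ (η + θ - y) ≤ A₁ * ω₁ η :=
    h₁ _ _ (by rwa [show η + θ - y - η = -(y - θ) by abel, norm_neg])
  calc ω₁ (η + θ - y) * ω₂ y ≤ (A₁ * ω₁ η) * (A₂ * ω₂ θ) :=
        mul_le_mul hle₁ (h₂ y θ hy') (hpos₂ y) (mul_nonneg hA₁ (hpos₁ η))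
    _ = A₁ * A₂ * (ω₁ η * ω₂ θ) := by ring

theorem ofReal_abs_div_mul_le_eLpNorm_div
    (h₁ : ∀ ξ η, ‖ξ - η‖ ≤ 1 → ω₁ ξ ≤ A₁ * ω₁ η) (h₂ : ∀ ξ η, ‖ξ - η‖ ≤ 1 → ω₂ ξ ≤ A₂ * ω₂ η)
    (hA₁ : 0 ≤ A₁) (hpos₁ : ∀ ξ, 0 < ω₁ ξ) (hpos₂ : ∀ ξ, 0 < ω₂ ξ) {q : ℝ} (hq : 0 < q)
    (a : ℝ) (η θ : EuclideanSpace ℝ (Fin n)) :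
    ENNReal.ofReal (|a| / (A₁ * A₂ * (ω₁ η * ω₂ θ))) *
        volume (Metric.ball (0 : EuclideanSpace ℝ (Fin n)) 1) ^ (1 / q) ≤
      eLpNorm (fun y => a / (ω₁ (η + θ - y) * ω₂ y)) (ENNReal.ofReal q) volume := by
  have hbound : ∀ y ∈ Metric.ball θ 1,
      |a| / (A₁ * A₂ * (ω₁ η * ω₂ θ)) ≤ ‖a / (ω₁ (η + θ - y) * ω₂ y)‖ := fun y hy => by
    have hden := mul_pos (hpos₁ (η + θ - y)) (hpos₂ y)
    rw [norm_div, Real.norm_eq_abs, Real.norm_of_nonneg hden.le]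
    exact div_le_div_of_nonneg_left (abs_nonneg a) hden
      (apply_sub_mul_apply_le_of_mem_ball h₁ h₂ hA₁ (fun ξ => (hpos₁ ξ).le)
        (fun ξ => (hpos₂ ξ).le) hy)
  have hlower := ofReal_mul_measure_rpow_le_eLpNorm (μ := volume) (by simpa using hq)
    ENNReal.ofReal_ne_top Metric.isOpen_ball.measurableSet hbound
  rwa [ENNReal.toReal_ofReal hq.le, Measure.addHaar_ball_center] at hlower

end

theorem weight_estimate_of_Lq_condition_general {n : ℕ}
    (ω ω₁ ω₂ : EuclideanSpace ℝ (Fin n) → ℝ)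
    (hω₁ : IsWeight ω₁) (hω₂ : IsWeight ω₂)
    (q : ℝ) (hq : 1 ≤ q)
    (hCq : (⨆ ξ, eLpNorm (fun η => ω ξ / (ω₁ (ξ - η) * ω₂ η)) (ENNReal.ofReal q) volume)
      < ⊤) :
    ∃ C : ℝ, 0 < C ∧ ∀ η θ, ω (η + θ) ≤ C * (ω₁ η * ω₂ θ) := by
  obtain ⟨A₁, hA₁, h₁⟩ := hω₁.exists_le_mul_of_norm_sub_le_one
  obtain ⟨A₂, hA₂, h₂⟩ := hω₂.exists_le_mul_of_norm_sub_le_one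
  set M := ⨆ ξ, eLpNorm (fun η => ω ξ / (ω₁ (ξ - η) * ω₂ η)) (ENNReal.ofReal q) volume
  set v := volume (Metric.ball (0 : EuclideanSpace ℝ (Fin n)) 1) ^ (1 / q)
  have hv0 : v ≠ 0 :=
    (ENNReal.rpow_pos (Metric.measure_ball_pos _ _ one_pos) measure_ball_lt_top.ne).ne'
  have hv : v ≠ ∞ := ENNReal.rpow_ne_top_of_nonneg (by positivity) measure_ball_lt_top.ne
  set B := (M / v).toReal
  refine ⟨B * (A₁ * A₂) + 1, by positivity, fun η θ => ?_⟩
  have hD : 0 < A₁ * A₂ * (ω₁ η * ω₂ θ) := by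
    have := hω₁.1 η; have := hω₂.1 θ; positivity
  have hratio : |ω (η + θ)| / (A₁ * A₂ * (ω₁ η * ω₂ θ)) ≤ B := by
    rw [← ENNReal.ofReal_le_iff_le_toReal (ENNReal.div_lt_top hCq.ne hv0).ne,
      ENNReal.le_div_iff_mul_le (.inl hv0) (.inl hv)]
    exact (ofReal_abs_div_mul_le_eLpNorm_div h₁ h₂ hA₁.le hω₁.1 hω₂.1 (by linarith) _ η θ).trans
      (le_iSup (fun ξ => eLpNorm (fun y => ω ξ / (ω₁ (ξ - y) * ω₂ y)) _ volume) (η + θ))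
  calc ω (η + θ) ≤ |ω (η + θ)| := le_abs_self _
    _ ≤ B * (A₁ * A₂ * (ω₁ η * ω₂ θ)) := (div_le_iff₀ hD).1 hratio
    _ ≤ (B * (A₁ * A₂) + 1) * (ω₁ η * ω₂ θ) := by
      have := hω₁.1 η; have := hω₂.1 θ; nlinarith

/-- If the weight functions `ω, ω₁, ω₂` satisfy
`sup_ξ ‖ω(ξ)/(ω₁(ξ-·) ω₂(·))‖_{L^q} < ∞` for some `1 ≤ q < ∞`, then
`ω(η+θ) ≤ C ω₁(η) ω₂(θ)` for all `η, θ` and a suitable `C > 0`.  (In particular, taking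
`ω₁ = ω₂ = ω`, a weight satisfying the `L^q` condition with itself satisfies the
sub-multiplicative condition (SM).) -/
theorem weight_estimate_of_Lq_condition {n : ℕ}
    (ω ω₁ ω₂ : EuclideanSpace ℝ (Fin n) → ℝ)
    (hω : IsWeight ω) (hω₁ : IsWeight ω₁) (hω₂ : IsWeight ω₂)
    (q : ℝ) (hq : 1 ≤ q)
    (hCq : (⨆ ξ, eLpNorm (fun η => ω ξ / (ω₁ (ξ - η) * ω₂ η)) (ENNReal.ofReal q) volume)
      < ⊤) :
    ∃ C : ℝ, 0 < C ∧ ∀ η θ, ω (η + θ) ≤ C * (ω₁ η * ω₂ θ) :=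
  weight_estimate_of_Lq_condition_general ω ω₁ ω₂ hω₁ hω₂ q hq hCq
end

section
/- Let p, q ∈ [1,+∞] with 1/p + 1/q = 1, and let ω, ω₁, ω₂, γ be weight functions on ℝⁿ such that C_q := sup_{ξ∈ℝⁿ} ‖ω₂(ξ)γ(·)/(ω₁(·)ω(ξ−·))‖_{L^q(ℝⁿ)} < ∞. Let a(x,ξ) be a measurable function on ℝⁿ×ℝⁿ, Schwartz (or at least tempered and integrable against Schwartz functions) in x for each ξ, such that A := sup_{ξ∈ℝⁿ} ‖ω(·) â(·,ξ)/γ(ξ)‖_{L^p(ℝⁿ)} < ∞, where â(η,ξ) denotes the partial Fourier transform of a(x,ξ) in x. Then for every Schwartz function u on ℝⁿ, the function a(x,D)u(x) = (2π)^{−n} ∫ e^{i x·ξ} a(x,ξ) û(ξ) dξ satisfies ‖ω₂ · (a(·,D)u)^∧‖_{L^p} ≤ (2π)^{−n} C_q A ‖ω₁ û‖_{L^p}; equivalently a(x,D) is bounded from FL^p_{ω₁}(ℝⁿ) to FL^p_{ω₂}(ℝⁿ). -/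
open MeasureTheory
open scoped ENNReal RealInnerProductSpace

/-- The partial Fourier transform `â(η,ξ)` of a symbol `a(x,ξ)` with respect to `x`. -/
noncomputable def partialFT {n : ℕ} (a : EuclideanSpace ℝ (Fin n) → EuclideanSpace ℝ (Fin n) → ℂ)
    (η ξ : EuclideanSpace ℝ (Fin n)) : ℂ :=
  ∫ x, Complex.exp (-Complex.I * (⟪x, η⟫ : ℝ)) * a x ξ

/-! ### Auxiliary material -/

/-- An `ℝ≥0∞`-valued analogue of the `L^r` seminorm. -/
noncomputable def eN {G : Type*} [MeasurableSpace G] (μ : Measure G) (g : G → ℝ≥0∞)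
    (r : ℝ≥0∞) : ℝ≥0∞ :=
  if r = ∞ then essSup g μ else (∫⁻ x, g x ^ r.toReal ∂μ) ^ (1 / r.toReal)

lemma eN_top {G : Type*} [MeasurableSpace G] (μ : Measure G) (g : G → ℝ≥0∞) :
    eN μ g ∞ = essSup g μ := if_pos rfl

lemma eN_one {G : Type*} [MeasurableSpace G] (μ : Measure G) (g : G → ℝ≥0∞) :
    eN μ g 1 = ∫⁻ x, g x ∂μ := by
  simp [eN]

lemma eN_eq_eLpNorm {G : Type*} [MeasurableSpace G] (μ : Measure G) {F : Type*}
    [NormedAddCommGroup F] (f : G → F) (r : ℝ≥0∞) (hr : r ≠ 0) :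
    eN μ (fun x => (‖f x‖₊ : ℝ≥0∞)) r = eLpNorm f r μ := by
  rcases eq_or_ne r ∞ with rfl | h
  · rw [eN_top, eLpNorm_exponent_top]; rfl
  · rw [eN, if_neg h, eLpNorm_eq_lintegral_rpow_enorm_toReal hr h]; rfl

lemma measurable_partialFT {n : ℕ}
    {a : EuclideanSpace ℝ (Fin n) → EuclideanSpace ℝ (Fin n) → ℂ}
    (ha : Measurable (Function.uncurry a)) :
    Measurable (fun z : EuclideanSpace ℝ (Fin n) × EuclideanSpace ℝ (Fin n) =>
      partialFT a z.1 z.2) := by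
  have hc : Continuous fun w : (EuclideanSpace ℝ (Fin n) × EuclideanSpace ℝ (Fin n)) ×
      EuclideanSpace ℝ (Fin n) => Complex.exp (-Complex.I * ((⟪w.2, w.1.1⟫ : ℝ) : ℂ)) :=
    Complex.continuous_exp.comp <| continuous_const.mul <| Complex.continuous_ofReal.comp <|
      continuous_inner.comp (continuous_snd.prodMk (continuous_fst.fst))
  have h : StronglyMeasurable fun w : (EuclideanSpace ℝ (Fin n) × EuclideanSpace ℝ (Fin n)) ×
      EuclideanSpace ℝ (Fin n) =>
      Complex.exp (-Complex.I * ((⟪w.2, w.1.1⟫ : ℝ) : ℂ)) * a w.2 w.1.2 :=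
    (hc.measurable.mul (ha.comp (measurable_snd.prodMk measurable_fst.snd))).stronglyMeasurable
  exact h.integral_prod_right'.measurable

lemma measurable_fourierInt {n : ℕ} (f : EuclideanSpace ℝ (Fin n) → ℂ) (hf : Continuous f) :
    Measurable (fourierInt f) := by
  have hc : Continuous fun w : EuclideanSpace ℝ (Fin n) × EuclideanSpace ℝ (Fin n) =>
      Complex.exp (-Complex.I * ((⟪w.2, w.1⟫ : ℝ) : ℂ)) * f w.2 :=
    (Complex.continuous_exp.comp <| continuous_const.mul <| Complex.continuous_ofReal.comp <|
      continuous_inner.comp (continuous_snd.prodMk continuous_fst)).mul (hf.comp continuous_snd)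
  exact hc.stronglyMeasurable.integral_prod_right'.measurable

/-- The abstract core estimate. -/
theorem core_estimate {G : Type*} [MeasurableSpace G] [AddGroup G] [MeasurableAdd₂ G]
    [MeasurableSub₂ G] [MeasurableNeg G]
    (μ : Measure G) [SFinite μ] [μ.IsAddRightInvariant]
    (p q : ℝ≥0∞) (hp : 1 ≤ p) (hpq : p⁻¹ + q⁻¹ = 1)
    (F : G → ℂ) (KN GN : G → G → ℝ≥0∞) (fN : G → ℝ≥0∞)
    (hKN : Measurable (Function.uncurry KN))
    (hGN : Measurable (Function.uncurry GN))
    (hfN : Measurable fN)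
    (C0 CqE AE : ℝ≥0∞) (hC0 : C0 ≠ ∞) (hCqfin : CqE ≠ ∞) (hAfin : AE ≠ ∞)
    (hCqE : ∀ η, eN μ (KN η) q ≤ CqE)
    (hAE : ∀ ξ, eN μ (GN ξ) p ≤ AE)
    (hFpt : ∀ η, (‖F η‖₊ : ℝ≥0∞) ≤ C0 * ∫⁻ ξ, KN η ξ * (GN ξ (η - ξ) * fN ξ) ∂μ) :
    eLpNorm F p μ ≤ C0 * CqE * AE * eN μ fN p := by
  have hp0 : p ≠ 0 := (lt_of_lt_of_le zero_lt_one hp).ne'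
  have hKN1 : ∀ η, Measurable (KN η) := fun η =>
    hKN.comp (measurable_const.prodMk measurable_id)
  have hGN1 : ∀ ξ, Measurable (GN ξ) := fun ξ =>
    hGN.comp (measurable_const.prodMk measurable_id)
  have hH_meas : Measurable fun z : G × G => GN z.2 (z.1 - z.2) * fN z.2 :=
    (hGN.comp ((measurable_snd).prodMk (measurable_fst.sub measurable_snd))).mul
      (hfN.comp measurable_snd)
  by_cases hp_top : p = ∞
  · -- p = ∞, q = 1
    have hq1 : q = 1 := by
      rw [hp_top] at hpq
      simpa using hpq
    subst hq1; subst hp_top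
    -- a.e. bound for GN along the shear
    have hGbd : ∀ ξ, ∀ᵐ η ∂μ, GN ξ η ≤ AE := by
      intro ξ
      have h := hAE ξ
      rw [eN_top] at h
      exact (ENNReal.ae_le_essSup _).mono fun η hη => le_trans hη h
    set s : Set (G × G) := {z : G × G | AE < GN z.1 z.2} with hs_def
    have hs_meas : MeasurableSet s := measurableSet_lt measurable_const hGN
    have hs0 : (μ.prod μ) s = 0 := by
      rw [Measure.measure_prod_null hs_meas]
      refine Filter.Eventually.of_forall fun ξ => ?_
      have h := hGbd ξ
      rw [Filter.eventually_iff, mem_ae_iff] at h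
      show μ (Prod.mk ξ ⁻¹' s) = 0
      have hset : Prod.mk ξ ⁻¹' s = {η | GN ξ η ≤ AE}ᶜ := by
        ext η; simp [hs_def, not_le]
      rw [hset]
      exact h
    have hφ : MeasurePreserving (fun z : G × G => (z.2, z.1 - z.2)) (μ.prod μ) (μ.prod μ) :=
      (measurePreserving_prod_sub μ μ).comp Measure.measurePreserving_swap
    have hpre0 : (μ.prod μ) ((fun z : G × G => (z.2, z.1 - z.2)) ⁻¹' s) = 0 := by
      rw [hφ.measure_preimage hs_meas.nullMeasurableSet, hs0]
    have hae : ∀ᵐ η ∂μ, ∀ᵐ ξ ∂μ, GN ξ (η - ξ) ≤ AE := by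
      have h : ∀ᵐ z ∂(μ.prod μ), GN z.2 (z.1 - z.2) ≤ AE := by
        rw [Filter.eventually_iff, mem_ae_iff]
        have : {z : G × G | GN z.2 (z.1 - z.2) ≤ AE}ᶜ =
            (fun z : G × G => (z.2, z.1 - z.2)) ⁻¹' s := by
          ext z; simp [hs_def, not_le]
        rw [this]; exact hpre0
      exact Measure.ae_ae_of_ae_prod h
    have hfbd : ∀ᵐ ξ ∂μ, fN ξ ≤ eN μ fN ∞ := by
      rw [eN_top]; exact ENNReal.ae_le_essSup fN
    rw [eLpNorm_exponent_top, eLpNormEssSup]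
    refine essSup_le_of_ae_le _ ?_
    filter_upwards [hae] with η hη
    calc (‖F η‖₊ : ℝ≥0∞) ≤ C0 * ∫⁻ ξ, KN η ξ * (GN ξ (η - ξ) * fN ξ) ∂μ := hFpt η
      _ ≤ C0 * ∫⁻ ξ, KN η ξ * (AE * eN μ fN ∞) ∂μ := by
          refine mul_le_mul_right (lintegral_mono_ae ?_) _
          filter_upwards [hη, hfbd] with ξ h1 h2
          exact mul_le_mul_right (mul_le_mul' h1 h2) _
      _ = C0 * ((∫⁻ ξ, KN η ξ ∂μ) * (AE * eN μ fN ∞)) := by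
          rw [lintegral_mul_const _ (hKN1 η)]
      _ ≤ C0 * (CqE * (AE * eN μ fN ∞)) := by
          gcongr
          have h := hCqE η
          rwa [eN_one] at h
      _ = C0 * CqE * AE * eN μ fN ∞ := by ring
  by_cases hp_one : p = 1
  · -- p = 1, q = ∞
    have hq_top : q = ∞ := by
      rw [hp_one] at hpq
      simp only [inv_one] at hpq
      have h0 : q⁻¹ = 0 := by
        have h := hpq
        nth_rewrite 2 [← add_zero (1 : ℝ≥0∞)] at h
        exact (ENNReal.add_right_inj ENNReal.one_ne_top).mp h
      simpa using h0
    subst hq_top; subst hp_one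
    have hKbd : ∀ η, ∀ᵐ ξ ∂μ, KN η ξ ≤ CqE := by
      intro η
      have h := hCqE η
      rw [eN_top] at h
      exact (ENNReal.ae_le_essSup _).mono fun ξ hξ => le_trans hξ h
    calc eLpNorm F 1 μ = ∫⁻ η, (‖F η‖₊ : ℝ≥0∞) ∂μ := eLpNorm_one_eq_lintegral_enorm
      _ ≤ ∫⁻ η, C0 * ∫⁻ ξ, KN η ξ * (GN ξ (η - ξ) * fN ξ) ∂μ ∂μ := lintegral_mono hFpt
      _ = C0 * ∫⁻ η, ∫⁻ ξ, KN η ξ * (GN ξ (η - ξ) * fN ξ) ∂μ ∂μ :=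
          lintegral_const_mul' _ _ hC0
      _ ≤ C0 * ∫⁻ η, ∫⁻ ξ, CqE * (GN ξ (η - ξ) * fN ξ) ∂μ ∂μ := by
          refine mul_le_mul_right (lintegral_mono fun η => lintegral_mono_ae ?_) _
          filter_upwards [hKbd η] with ξ h1
          exact mul_le_mul_left h1 _
      _ = C0 * (CqE * ∫⁻ η, ∫⁻ ξ, GN ξ (η - ξ) * fN ξ ∂μ ∂μ) := by
          rw [← lintegral_const_mul' CqE _ hCqfin]
          congr 1
          refine lintegral_congr fun η => ?_
          rw [← lintegral_const_mul' CqE _ hCqfin]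
      _ = C0 * (CqE * ∫⁻ ξ, ∫⁻ η, GN ξ (η - ξ) * fN ξ ∂μ ∂μ) := by
          rw [lintegral_lintegral_swap hH_meas.aemeasurable]
      _ = C0 * (CqE * ∫⁻ ξ, (∫⁻ η, GN ξ η ∂μ) * fN ξ ∂μ) := by
          congr 2
          refine lintegral_congr fun ξ => ?_
          have hmeas' : Measurable fun η => GN ξ (η - ξ) :=
            (hGN1 ξ).comp (measurable_id.sub measurable_const)
          rw [lintegral_mul_const _ hmeas',
            lintegral_sub_right_eq_self (fun η => GN ξ η) ξ]
      _ ≤ C0 * (CqE * ∫⁻ ξ, AE * fN ξ ∂μ) := by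
          gcongr with ξ
          have h := hAE ξ
          rwa [eN_one] at h
      _ = C0 * (CqE * (AE * ∫⁻ ξ, fN ξ ∂μ)) := by
          rw [lintegral_const_mul' AE _ hAfin]
      _ = C0 * CqE * AE * eN μ fN 1 := by rw [eN_one]; ring
  · -- 1 < p < ∞
    have hq0 : q ≠ 0 := by
      intro h; rw [h] at hpq; simp at hpq
    have hq_top : q ≠ ∞ := by
      intro h; rw [h] at hpq; simp at hpq
      exact hp_one (by simpa using congrArg (·⁻¹) hpq)
    have hp1 : 1 < p := lt_of_le_of_ne hp (Ne.symm hp_one)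
    set pr := p.toReal with hpr_def
    set qr := q.toReal with hqr_def
    have hpr_pos : 0 < pr := ENNReal.toReal_pos hp0 hp_top
    have hq1 : 1 < q := by
      by_contra h
      push_neg at h
      have h1 : (1 : ℝ≥0∞) ≤ q⁻¹ := ENNReal.one_le_inv.mpr h
      have h2 : p⁻¹ + 1 ≤ 0 + 1 := by
        rw [zero_add]; exact le_trans (add_le_add_right h1 _) hpq.le
      have h3 : p⁻¹ = 0 :=
        le_antisymm ((ENNReal.add_le_add_iff_right ENNReal.one_ne_top).mp h2) zero_le
      exact hp_top (by simpa using h3)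
    have hsum : pr⁻¹ + qr⁻¹ = 1 := by
      have h := congrArg ENNReal.toReal hpq
      rw [ENNReal.toReal_add (by simp [hp0]) (by simp [hq0]), ENNReal.toReal_inv,
        ENNReal.toReal_inv, ENNReal.toReal_one] at h
      exact h
    have hqr1 : 1 < qr := by
      rw [hqr_def, ← ENNReal.toReal_one]
      exact (ENNReal.toReal_lt_toReal (by simp) hq_top).mpr hq1
    have conj : qr.HolderConjugate pr := ⟨by rw [inv_one, add_comm]; exact hsum, by linarith, hpr_pos⟩
    -- Hölder step
    have holder : ∀ η, (∫⁻ ξ, KN η ξ * (GN ξ (η - ξ) * fN ξ) ∂μ) ≤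
        CqE * (∫⁻ ξ, (GN ξ (η - ξ) * fN ξ) ^ pr ∂μ) ^ (1 / pr) := by
      intro η
      have hHη : Measurable fun ξ => GN ξ (η - ξ) * fN ξ :=
        hH_meas.comp (measurable_const.prodMk measurable_id)
      have h1 := ENNReal.lintegral_mul_le_Lp_mul_Lq μ conj (hKN1 η).aemeasurable
        hHη.aemeasurable
      calc (∫⁻ ξ, KN η ξ * (GN ξ (η - ξ) * fN ξ) ∂μ)
          = ∫⁻ ξ, ((KN η) * fun ξ => GN ξ (η - ξ) * fN ξ) ξ ∂μ := by rfl
        _ ≤ (∫⁻ ξ, KN η ξ ^ qr ∂μ) ^ (1 / qr) *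
            (∫⁻ ξ, (GN ξ (η - ξ) * fN ξ) ^ pr ∂μ) ^ (1 / pr) := h1
        _ ≤ CqE * (∫⁻ ξ, (GN ξ (η - ξ) * fN ξ) ^ pr ∂μ) ^ (1 / pr) := by
            gcongr
            have h := hCqE η
            rwa [eN, if_neg hq_top] at h
    have hD_ne : (C0 * CqE) ^ pr ≠ ∞ :=
      ENNReal.rpow_ne_top_of_nonneg hpr_pos.le (ENNReal.mul_ne_top hC0 hCqfin)
    calc eLpNorm F p μ
        = (∫⁻ η, (‖F η‖₊ : ℝ≥0∞) ^ pr ∂μ) ^ (1 / pr) :=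
          eLpNorm_eq_lintegral_rpow_enorm_toReal hp0 hp_top
      _ ≤ (∫⁻ η, (C0 * CqE * (∫⁻ ξ, (GN ξ (η - ξ) * fN ξ) ^ pr ∂μ) ^ (1 / pr)) ^ pr ∂μ) ^
            (1 / pr) := by
          gcongr with η
          calc (‖F η‖₊ : ℝ≥0∞) ≤ C0 * ∫⁻ ξ, KN η ξ * (GN ξ (η - ξ) * fN ξ) ∂μ := hFpt η
            _ ≤ C0 * (CqE * (∫⁻ ξ, (GN ξ (η - ξ) * fN ξ) ^ pr ∂μ) ^ (1 / pr)) :=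
                mul_le_mul_right (holder η) _
            _ = C0 * CqE * (∫⁻ ξ, (GN ξ (η - ξ) * fN ξ) ^ pr ∂μ) ^ (1 / pr) :=
                (mul_assoc _ _ _).symm
      _ = C0 * CqE * (∫⁻ η, ∫⁻ ξ, (GN ξ (η - ξ) * fN ξ) ^ pr ∂μ ∂μ) ^ (1 / pr) := by
          have hsplit : ∀ η : G, (C0 * CqE *
              (∫⁻ ξ, (GN ξ (η - ξ) * fN ξ) ^ pr ∂μ) ^ (1 / pr)) ^ pr
              = (C0 * CqE) ^ pr * ∫⁻ ξ, (GN ξ (η - ξ) * fN ξ) ^ pr ∂μ := fun η => by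
            rw [ENNReal.mul_rpow_of_nonneg _ _ hpr_pos.le, one_div,
              ENNReal.rpow_inv_rpow hpr_pos.ne']
          rw [lintegral_congr hsplit, lintegral_const_mul' _ _ hD_ne,
            ENNReal.mul_rpow_of_nonneg _ _ (by positivity : (0:ℝ) ≤ 1 / pr),
            ← ENNReal.rpow_mul, mul_one_div_cancel hpr_pos.ne', ENNReal.rpow_one]
      _ = C0 * CqE * (∫⁻ ξ, ∫⁻ η, (GN ξ (η - ξ) * fN ξ) ^ pr ∂μ ∂μ) ^ (1 / pr) := by
          rw [lintegral_lintegral_swap (hH_meas.pow_const pr).aemeasurable]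
      _ ≤ C0 * CqE * (∫⁻ ξ, AE ^ pr * fN ξ ^ pr ∂μ) ^ (1 / pr) := by
          gcongr with ξ
          calc ∫⁻ η, (GN ξ (η - ξ) * fN ξ) ^ pr ∂μ
              = (∫⁻ η, GN ξ (η - ξ) ^ pr ∂μ) * fN ξ ^ pr := by
                have hmeas' : Measurable fun η => GN ξ (η - ξ) ^ pr :=
                  ((hGN1 ξ).comp (measurable_id.sub measurable_const)).pow_const pr
                simp_rw [ENNReal.mul_rpow_of_nonneg _ _ hpr_pos.le]
                rw [lintegral_mul_const _ hmeas']
            _ = (∫⁻ η, GN ξ η ^ pr ∂μ) * fN ξ ^ pr := by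
                rw [lintegral_sub_right_eq_self (fun η => GN ξ η ^ pr) ξ]
            _ ≤ AE ^ pr * fN ξ ^ pr := by
                gcongr
                have h := hAE ξ
                rw [eN, if_neg hp_top] at h
                calc ∫⁻ η, GN ξ η ^ pr ∂μ
                    = ((∫⁻ η, GN ξ η ^ pr ∂μ) ^ (1 / pr)) ^ pr := by
                      rw [one_div, ENNReal.rpow_inv_rpow hpr_pos.ne']
                  _ ≤ AE ^ pr := ENNReal.rpow_le_rpow h hpr_pos.le
      _ = C0 * CqE * AE * eN μ fN p := by
          rw [lintegral_const_mul' _ _ (ENNReal.rpow_ne_top_of_nonneg hpr_pos.le hAfin),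
            ENNReal.mul_rpow_of_nonneg _ _ (by positivity : (0:ℝ) ≤ 1 / pr),
            ← ENNReal.rpow_mul, mul_one_div_cancel hpr_pos.ne', ENNReal.rpow_one,
            eN, if_neg hp_top, mul_assoc]
          rw [← hpr_def]
          ring

/-- Boundedness of a pseudodifferential operator with symbol in a weighted Fourier
Lebesgue class: if `C_q = sup_ξ ‖ω₂(ξ)γ(·)/(ω₁(·)ω(ξ-·))‖_{L^q} < ∞` (where `1/p+1/q = 1`)
and `A = sup_ξ ‖ω(·) â(·,ξ)/γ(ξ)‖_{L^p} < ∞`, then for every Schwartz `u`, the Fourier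
transform of `a(x,D)u` — given by `(a(·,D)u)^(η) = (2π)^{-n} ∫ â(η-ξ,ξ) û(ξ) dξ` —
satisfies `‖ω₂ · (a(·,D)u)^‖_{L^p} ≤ (2π)^{-n} C_q A ‖ω₁ û‖_{L^p}`, i.e. `a(x,D)` is
bounded from `FL^p_{ω₁}(ℝⁿ)` to `FL^p_{ω₂}(ℝⁿ)`. -/
theorem pseudodiff_fourierLebesgue_bound {n : ℕ}
    (ω ω₁ ω₂ γ : EuclideanSpace ℝ (Fin n) → ℝ)
    (hω : IsWeight ω) (hω₁ : IsWeight ω₁) (hω₂ : IsWeight ω₂) (hγ : IsWeight γ)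
    (p q : ℝ≥0∞) (hp : 1 ≤ p) (hq : 1 ≤ q) (hpq : p⁻¹ + q⁻¹ = 1)
    (a : EuclideanSpace ℝ (Fin n) → EuclideanSpace ℝ (Fin n) → ℂ)
    (ha_meas : Measurable (Function.uncurry a))
    (ha_int : ∀ ξ, Integrable (fun x => a x ξ) volume)
    (hCq : (⨆ ξ, eLpNorm (fun η => ω₂ ξ * γ η / (ω₁ η * ω (ξ - η))) q volume) < ⊤)
    (hA : (⨆ ξ, eLpNorm (fun η => ((ω η / γ ξ : ℝ) : ℂ) * partialFT a η ξ) p volume) < ⊤)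
    (u : SchwartzMap (EuclideanSpace ℝ (Fin n)) ℂ) :
    eLpNorm (fun η => (ω₂ η : ℂ) * ((((2 * Real.pi) ^ n)⁻¹ : ℝ) : ℂ) *
        ∫ ξ, partialFT a (η - ξ) ξ * fourierInt (fun x => u x) ξ) p volume ≤
      ENNReal.ofReal (((2 * Real.pi) ^ n)⁻¹) *
      (⨆ ξ, eLpNorm (fun η => ω₂ ξ * γ η / (ω₁ η * ω (ξ - η))) q volume) *
      (⨆ ξ, eLpNorm (fun η => ((ω η / γ ξ : ℝ) : ℂ) * partialFT a η ξ) p volume) *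
      eLpNorm (fun ξ => (ω₁ ξ : ℂ) * fourierInt (fun x => u x) ξ) p volume := by
  obtain ⟨hωpos, hωmeas, -⟩ := hω
  obtain ⟨hω₁pos, hω₁meas, -⟩ := hω₁
  obtain ⟨hω₂pos, hω₂meas, -⟩ := hω₂
  obtain ⟨hγpos, hγmeas, -⟩ := hγ
  have hp0 : p ≠ 0 := (lt_of_lt_of_le zero_lt_one hp).ne'
  have hq0 : q ≠ 0 := (lt_of_lt_of_le zero_lt_one hq).ne'
  set c : ℝ := ((2 * Real.pi) ^ n)⁻¹ with hc_def
  have hc : 0 ≤ c := by positivity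
  set C0 : ℝ≥0∞ := ENNReal.ofReal c with hC0_def
  set KN : EuclideanSpace ℝ (Fin n) → EuclideanSpace ℝ (Fin n) → ℝ≥0∞ :=
    fun η ξ => (‖ω₂ η * γ ξ / (ω₁ ξ * ω (η - ξ))‖₊ : ℝ≥0∞) with hKN_def
  set GN : EuclideanSpace ℝ (Fin n) → EuclideanSpace ℝ (Fin n) → ℝ≥0∞ :=
    fun ξ η => (‖((ω η / γ ξ : ℝ) : ℂ) * partialFT a η ξ‖₊ : ℝ≥0∞) with hGN_def
  set fN : EuclideanSpace ℝ (Fin n) → ℝ≥0∞ :=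
    fun ξ => (‖(ω₁ ξ : ℂ) * fourierInt (fun x => u x) ξ‖₊ : ℝ≥0∞) with hfN_def
  set CqE : ℝ≥0∞ := ⨆ ξ, eLpNorm (fun η => ω₂ ξ * γ η / (ω₁ η * ω (ξ - η))) q volume with hCqE_def
  set AE : ℝ≥0∞ := ⨆ ξ, eLpNorm (fun η => ((ω η / γ ξ : ℝ) : ℂ) * partialFT a η ξ) p volume
    with hAE_def
  have hKN_meas : Measurable (Function.uncurry KN) :=
    (((hω₂meas.comp measurable_fst).mul (hγmeas.comp measurable_snd)).div
      ((hω₁meas.comp measurable_snd).mul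
        (hωmeas.comp (measurable_fst.sub measurable_snd)))).enorm
  have hGN_meas : Measurable (Function.uncurry GN) :=
    ((Complex.measurable_ofReal.comp
        ((hωmeas.comp measurable_snd).div (hγmeas.comp measurable_fst))).mul
      ((measurable_partialFT ha_meas).comp (measurable_snd.prodMk measurable_fst))).enorm
  have hfN_meas : Measurable fN :=
    ((Complex.measurable_ofReal.comp hω₁meas).mul
      (measurable_fourierInt (fun x => u x) u.continuous)).enorm
  have hCqE : ∀ η, eN volume (KN η) q ≤ CqE := by
    intro η
    rw [hKN_def]
    rw [eN_eq_eLpNorm volume (fun ξ => ω₂ η * γ ξ / (ω₁ ξ * ω (η - ξ))) q hq0]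
    exact le_iSup (fun ξ => eLpNorm (fun η' => ω₂ ξ * γ η' / (ω₁ η' * ω (ξ - η'))) q volume) η
  have hAE : ∀ ξ, eN volume (GN ξ) p ≤ AE := by
    intro ξ
    rw [hGN_def]
    rw [eN_eq_eLpNorm volume (fun η => ((ω η / γ ξ : ℝ) : ℂ) * partialFT a η ξ) p hp0]
    exact le_iSup (fun ξ' => eLpNorm (fun η => ((ω η / γ ξ' : ℝ) : ℂ) * partialFT a η ξ') p
      volume) ξ
  -- the pointwise identity
  have key : ∀ η ξ, ENNReal.ofReal (ω₂ η) *
      ((‖partialFT a (η - ξ) ξ‖₊ : ℝ≥0∞) * (‖fourierInt (fun x => u x) ξ‖₊ : ℝ≥0∞)) =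
      KN η ξ * (GN ξ (η - ξ) * fN ξ) := by
    intro η ξ
    have h1 : KN η ξ = ENNReal.ofReal (ω₂ η * γ ξ / (ω₁ ξ * ω (η - ξ))) :=
      Real.enorm_eq_ofReal (div_nonneg (mul_nonneg (hω₂pos η).le (hγpos ξ).le)
        (mul_nonneg (hω₁pos ξ).le (hωpos _).le))
    have h2 : GN ξ (η - ξ) =
        ENNReal.ofReal (ω (η - ξ) / γ ξ * ‖partialFT a (η - ξ) ξ‖) := by
      rw [hGN_def]
      simp only [nnnorm_mul, ENNReal.coe_mul, Complex.nnnorm_real]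
      rw [← enorm_eq_nnnorm (ω (η - ξ) / γ ξ), Real.enorm_eq_ofReal (div_nonneg (hωpos _).le (hγpos ξ).le),
        ← enorm_eq_nnnorm (partialFT a (η - ξ) ξ), ← ofReal_norm,
        ← ENNReal.ofReal_mul (div_nonneg (hωpos _).le (hγpos ξ).le)]
    have h3 : fN ξ = ENNReal.ofReal (ω₁ ξ * ‖fourierInt (fun x => u x) ξ‖) := by
      rw [hfN_def]
      simp only [nnnorm_mul, ENNReal.coe_mul, Complex.nnnorm_real]
      rw [← enorm_eq_nnnorm (ω₁ ξ), Real.enorm_eq_ofReal (hω₁pos ξ).le,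
        ← enorm_eq_nnnorm (fourierInt (fun x => u x) ξ), ← ofReal_norm,
        ← ENNReal.ofReal_mul (hω₁pos ξ).le]
    rw [h1, h2, h3, ← enorm_eq_nnnorm, ← ofReal_norm, ← enorm_eq_nnnorm, ← ofReal_norm,
      ← ENNReal.ofReal_mul (norm_nonneg _), ← ENNReal.ofReal_mul (hω₂pos η).le,
      ← ENNReal.ofReal_mul (mul_nonneg (div_nonneg (hωpos _).le (hγpos ξ).le) (norm_nonneg _)),
      ← ENNReal.ofReal_mul (div_nonneg (mul_nonneg (hω₂pos η).le (hγpos ξ).le)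
        (mul_nonneg (hω₁pos ξ).le (hωpos _).le))]
    congr 1
    have hγ0 : γ ξ ≠ 0 := (hγpos ξ).ne'
    have hω₁0 : ω₁ ξ ≠ 0 := (hω₁pos ξ).ne'
    have hω0 : ω (η - ξ) ≠ 0 := (hωpos (η - ξ)).ne'
    field_simp
  have hFpt : ∀ η, (‖(ω₂ η : ℂ) * ((((2 * Real.pi) ^ n)⁻¹ : ℝ) : ℂ) *
      ∫ ξ, partialFT a (η - ξ) ξ * fourierInt (fun x => u x) ξ‖₊ : ℝ≥0∞) ≤
      C0 * ∫⁻ ξ, KN η ξ * (GN ξ (η - ξ) * fN ξ) := by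
    intro η
    have hnorm : (‖(ω₂ η : ℂ) * ((((2 * Real.pi) ^ n)⁻¹ : ℝ) : ℂ) *
        ∫ ξ, partialFT a (η - ξ) ξ * fourierInt (fun x => u x) ξ‖₊ : ℝ≥0∞) =
        ENNReal.ofReal (ω₂ η) * C0 *
        (‖∫ ξ, partialFT a (η - ξ) ξ * fourierInt (fun x => u x) ξ‖₊ : ℝ≥0∞) := by
      simp only [nnnorm_mul, ENNReal.coe_mul, Complex.nnnorm_real]
      rw [← enorm_eq_nnnorm (ω₂ η), Real.enorm_eq_ofReal (hω₂pos η).le, ← enorm_eq_nnnorm c,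
        Real.enorm_eq_ofReal hc]
    rw [hnorm]
    calc ENNReal.ofReal (ω₂ η) * C0 *
        (‖∫ ξ, partialFT a (η - ξ) ξ * fourierInt (fun x => u x) ξ‖₊ : ℝ≥0∞)
        ≤ ENNReal.ofReal (ω₂ η) * C0 *
          ∫⁻ ξ, (‖partialFT a (η - ξ) ξ * fourierInt (fun x => u x) ξ‖₊ : ℝ≥0∞) :=
          mul_le_mul_right (enorm_integral_le_lintegral_enorm _) _
      _ = C0 * ∫⁻ ξ, ENNReal.ofReal (ω₂ η) *
          ((‖partialFT a (η - ξ) ξ‖₊ : ℝ≥0∞) * (‖fourierInt (fun x => u x) ξ‖₊ : ℝ≥0∞)) := by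
          rw [mul_comm (ENNReal.ofReal (ω₂ η)) C0, mul_assoc,
            ← lintegral_const_mul' (ENNReal.ofReal (ω₂ η)) _ ENNReal.ofReal_ne_top]
          congr 1
          refine lintegral_congr fun ξ => ?_
          rw [nnnorm_mul, ENNReal.coe_mul]
      _ = C0 * ∫⁻ ξ, KN η ξ * (GN ξ (η - ξ) * fN ξ) := by
          congr 1
          exact lintegral_congr fun ξ => key η ξ
  have hmain := core_estimate (volume : Measure (EuclideanSpace ℝ (Fin n))) p q hp hpq
    (fun η => (ω₂ η : ℂ) * ((((2 * Real.pi) ^ n)⁻¹ : ℝ) : ℂ) *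
      ∫ ξ, partialFT a (η - ξ) ξ * fourierInt (fun x => u x) ξ)
    KN GN fN hKN_meas hGN_meas hfN_meas C0 CqE AE
    ENNReal.ofReal_ne_top hCq.ne hA.ne hCqE hAE hFpt
  calc eLpNorm (fun η => (ω₂ η : ℂ) * ((((2 * Real.pi) ^ n)⁻¹ : ℝ) : ℂ) *
        ∫ ξ, partialFT a (η - ξ) ξ * fourierInt (fun x => u x) ξ) p volume
      ≤ C0 * CqE * AE * eN volume fN p := hmain
    _ = ENNReal.ofReal (((2 * Real.pi) ^ n)⁻¹) * CqE * AE *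
        eLpNorm (fun ξ => (ω₁ ξ : ℂ) * fourierInt (fun x => u x) ξ) p volume := by
        rw [hfN_def, eN_eq_eLpNorm volume (fun ξ => (ω₁ ξ : ℂ) * fourierInt (fun x => u x) ξ)
          p hp0]
end

section
/- Let ω : ℝⁿ → (0,∞) be a continuous weight function satisfying the sub-additive condition (SA) and the condition (SH): ω(tξ) ≤ C ω(ξ) for all ξ ∈ ℝⁿ and |t| ≤ 1. Then: (1) for every ε > 0 there exists 0 < ε′ < ε such that for every set X ⊂ ℝⁿ one has (X_{[ε′ω]})_{[ε′ω]} ⊂ X_{[εω]} and (ℝⁿ∖X_{[εω]})_{[ε′ω]} ⊂ ℝⁿ∖X_{[ε′ω]}; (2) there exist constants ĉ > 0 and 0 < ε̂ < 1 such that for every X ⊂ ℝⁿ and every 0 < ε ≤ ε̂, if ξ ∈ X_{[εω]} then ω(ξ) > ĉ/ε. -/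
open MeasureTheory
open scoped ENNReal

/-- The sub-additive condition (SA). -/
def IsSubAdditiveWeight {n : ℕ} (ω : EuclideanSpace ℝ (Fin n) → ℝ) : Prop :=
  ∃ C : ℝ, 0 < C ∧ ∀ ξ η, ω ξ ≤ C * (ω (ξ - η) + ω η)

/-- Condition (SH): `ω(tξ) ≤ C ω(ξ)` for all `ξ` and `|t| ≤ 1`. -/
def SatisfiesSH {n : ℕ} (ω : EuclideanSpace ℝ (Fin n) → ℝ) : Prop :=
  ∃ C : ℝ, 0 < C ∧ ∀ (ξ : EuclideanSpace ℝ (Fin n)) (t : ℝ), |t| ≤ 1 → ω (t • ξ) ≤ C * ω ξ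

/-- The `[ω]`-neighborhood of size `ε` of a set `X ⊆ ℝⁿ`:
`X_{[εω]} = ⋃_{ξ₀ ∈ X} {ξ : ω(ξ - ξ₀) < ε ω(ξ₀)}`. -/
def brNbhd {n : ℕ} (ω : EuclideanSpace ℝ (Fin n) → ℝ) (ε : ℝ)
    (X : Set (EuclideanSpace ℝ (Fin n))) : Set (EuclideanSpace ℝ (Fin n)) :=
  ⋃ ξ₀ ∈ X, {ξ | ω (ξ - ξ₀) < ε * ω ξ₀}

/-! The relation `ω(ξ - ξ₀) < ε ω(ξ₀)` ("`ξ` is `ε`-close to `ξ₀`") is a quasi-metric relation: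
by (SA) close points have comparable weights, and then (SA) gives quasi-transitivity, while
(SH) at `t = -1` gives quasi-symmetry. Part (1) follows by choosing `ε'` small against the
resulting constants. For part (2), (SH) at `t = 0` gives `ω(0) ≤ K ω(ξ - ξ₀) < K ε ω(ξ₀)`, and
`ω(ξ₀)` is comparable to `ω(ξ)`. -/

open scoped Topology

section QuasiMetric

variable {E : Type*} [AddCommGroup E] {ω : E → ℝ} {C K ε a b : ℝ} {ξ ξ₀ ξ₁ : E}

theorem weight_lt_of_sub_lt (hSA : ∀ ξ η, ω ξ ≤ C * (ω (ξ - η) + ω η)) (hC : 0 < C)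
    (h : ω (ξ - ξ₀) < ε * ω ξ₀) : ω ξ < C * (1 + ε) * ω ξ₀ :=
  calc ω ξ ≤ C * (ω (ξ - ξ₀) + ω ξ₀) := hSA ξ ξ₀
    _ < C * (ε * ω ξ₀ + ω ξ₀) := by gcongr
    _ = C * (1 + ε) * ω ξ₀ := by ring

theorem weight_le_of_sub_lt (hω : ∀ ξ, 0 ≤ ω ξ) (hSA : ∀ ξ η, ω ξ ≤ C * (ω (ξ - η) + ω η))
    (hneg : ∀ ζ, ω (-ζ) ≤ K * ω ζ) (hC : 0 ≤ C) (hK : 0 ≤ K) (hε : 2 * C * K * ε ≤ 1)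
    (h : ω (ξ - ξ₀) < ε * ω ξ₀) : ω ξ₀ ≤ 2 * C * ω ξ := by
  have hsymm : ω (ξ₀ - ξ) ≤ K * ω (ξ - ξ₀) := neg_sub ξ ξ₀ ▸ hneg (ξ - ξ₀)
  have : ω ξ₀ ≤ C * K * ε * ω ξ₀ + C * ω ξ :=
    calc ω ξ₀ ≤ C * (ω (ξ₀ - ξ) + ω ξ) := hSA ξ₀ ξ
      _ ≤ C * (K * (ε * ω ξ₀) + ω ξ) := by gcongr; exact hsymm.trans (by gcongr)
      _ = C * K * ε * ω ξ₀ + C * ω ξ := by ring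
  nlinarith [hω ξ₀]

theorem sub_lt_of_sub_lt_of_sub_lt (hω : ∀ ξ, 0 ≤ ω ξ)
    (hSA : ∀ ξ η, ω ξ ≤ C * (ω (ξ - η) + ω η)) (hC : 0 < C) (ha : 0 ≤ a) (hb : b ≤ 1)
    (h₁ : ω (ξ - ξ₁) < a * ω ξ₁) (h₀ : ω (ξ₁ - ξ₀) < b * ω ξ₀) :
    ω (ξ - ξ₀) < C * (2 * C * a + b) * ω ξ₀ := by
  have hξ₁ : ω ξ₁ ≤ 2 * C * ω ξ₀ := by
    have := weight_lt_of_sub_lt hSA hC h₀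
    nlinarith [mul_nonneg (mul_nonneg hC.le (sub_nonneg.2 hb)) (hω ξ₀)]
  calc ω (ξ - ξ₀) ≤ C * (ω (ξ - ξ₁) + ω (ξ₁ - ξ₀)) := by
        simpa using hSA (ξ - ξ₀) (ξ₁ - ξ₀)
    _ < C * (a * ω ξ₁ + b * ω ξ₀) := by gcongr
    _ ≤ C * (a * (2 * C * ω ξ₀) + b * ω ξ₀) := by gcongr
    _ = C * (2 * C * a + b) * ω ξ₀ := by ring

theorem sub_lt_of_sub_lt_rebase (hω : ∀ ξ, 0 ≤ ω ξ)
    (hSA : ∀ ξ η, ω ξ ≤ C * (ω (ξ - η) + ω η)) (hneg : ∀ ζ, ω (-ζ) ≤ K * ω ζ) (hC : 0 ≤ C)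
    (hK : 0 ≤ K) (hε₀ : 0 ≤ ε) (hε : 2 * C * K * ε ≤ 1) (h : ω (ξ - ξ₀) < ε * ω ξ₀) :
    ω (ξ - ξ₀) < 2 * C * ε * ω ξ :=
  calc ω (ξ - ξ₀) < ε * ω ξ₀ := h
    _ ≤ ε * (2 * C * ω ξ) := by gcongr; exact weight_le_of_sub_lt hω hSA hneg hC hK hε h
    _ = 2 * C * ε * ω ξ := by ring

theorem neg_sub_lt_of_sub_lt (hω : ∀ ξ, 0 ≤ ω ξ)
    (hSA : ∀ ξ η, ω ξ ≤ C * (ω (ξ - η) + ω η)) (hneg : ∀ ζ, ω (-ζ) ≤ K * ω ζ) (hC : 0 ≤ C)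
    (hK : 0 < K) (hε₀ : 0 ≤ ε) (hε : 2 * C * K * ε ≤ 1) (h : ω (ξ - ξ₀) < ε * ω ξ₀) :
    ω (ξ₀ - ξ) < 2 * C * K * ε * ω ξ :=
  calc ω (ξ₀ - ξ) ≤ K * ω (ξ - ξ₀) := neg_sub ξ ξ₀ ▸ hneg (ξ - ξ₀)
    _ < K * (2 * C * ε * ω ξ) := by
        gcongr; exact sub_lt_of_sub_lt_rebase hω hSA hneg hC hK.le hε₀ hε h
    _ = 2 * C * K * ε * ω ξ := by ring

end QuasiMetric

theorem eventually_mul_lt (a : ℝ) {b : ℝ} (hb : 0 < b) : ∀ᶠ x in 𝓝 (0 : ℝ), a * x < b :=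
  ((continuous_const_mul a).tendsto' 0 0 (mul_zero a)).eventually (eventually_lt_nhds hb)

section Neighborhoods

variable {n : ℕ} {ω : EuclideanSpace ℝ (Fin n) → ℝ} {C K ε ε' : ℝ}
  {X : Set (EuclideanSpace ℝ (Fin n))}

theorem mem_brNbhd {ξ : EuclideanSpace ℝ (Fin n)} :
    ξ ∈ brNbhd ω ε X ↔ ∃ ξ₀ ∈ X, ω (ξ - ξ₀) < ε * ω ξ₀ := by
  simp [brNbhd]

theorem brNbhd_brNbhd_subset (hω : ∀ ξ, 0 ≤ ω ξ)
    (hSA : ∀ ξ η, ω ξ ≤ C * (ω (ξ - η) + ω η)) (hC : 0 < C) (hε'₀ : 0 ≤ ε') (hε'₁ : ε' ≤ 1)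
    (hε' : C * (2 * C + 1) * ε' ≤ ε) : brNbhd ω ε' (brNbhd ω ε' X) ⊆ brNbhd ω ε X := by
  intro ξ hξ
  obtain ⟨ξ₁, hξ₁, h₁⟩ := mem_brNbhd.1 hξ
  obtain ⟨ξ₀, hξ₀, h₀⟩ := mem_brNbhd.1 hξ₁
  refine mem_brNbhd.2 ⟨ξ₀, hξ₀, ?_⟩
  calc ω (ξ - ξ₀) < C * (2 * C * ε' + ε') * ω ξ₀ :=
        sub_lt_of_sub_lt_of_sub_lt hω hSA hC hε'₀ hε'₁ h₁ h₀
    _ = C * (2 * C + 1) * ε' * ω ξ₀ := by ring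
    _ ≤ ε * ω ξ₀ := by gcongr; exact hω ξ₀

theorem brNbhd_compl_brNbhd_subset (hω : ∀ ξ, 0 ≤ ω ξ)
    (hSA : ∀ ξ η, ω ξ ≤ C * (ω (ξ - η) + ω η)) (hneg : ∀ ζ, ω (-ζ) ≤ K * ω ζ) (hC : 0 < C)
    (hK : 0 < K) (hε'₀ : 0 ≤ ε') (hε'₁ : ε' ≤ 1) (hε'₂ : 2 * C * K * ε' ≤ 1)
    (hε' : C * (4 * C ^ 2 * K + 1) * ε' ≤ ε) :
    brNbhd ω ε' (brNbhd ω ε X)ᶜ ⊆ (brNbhd ω ε' X)ᶜ := by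
  intro ξ hξ hξX
  obtain ⟨η, hη, hξη⟩ := mem_brNbhd.1 hξ
  obtain ⟨ξ₀, hξ₀, hξξ₀⟩ := mem_brNbhd.1 hξX
  refine hη (mem_brNbhd.2 ⟨ξ₀, hξ₀, ?_⟩)
  have hηξ := neg_sub_lt_of_sub_lt hω hSA hneg hC.le hK hε'₀ hε'₂ hξη
  calc ω (η - ξ₀) < C * (2 * C * (2 * C * K * ε') + ε') * ω ξ₀ :=
        sub_lt_of_sub_lt_of_sub_lt hω hSA hC (by positivity) hε'₁ hηξ hξξ₀
    _ = C * (4 * C ^ 2 * K + 1) * ε' * ω ξ₀ := by ring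
    _ ≤ ε * ω ξ₀ := by gcongr; exact hω ξ₀

theorem lt_weight_of_mem_brNbhd (hω : ∀ ξ, 0 ≤ ω ξ)
    (hSA : ∀ ξ η, ω ξ ≤ C * (ω (ξ - η) + ω η)) (hneg : ∀ ζ, ω (-ζ) ≤ K * ω ζ)
    (h₀ : ∀ ζ, ω 0 ≤ K * ω ζ) (hC : 0 < C) (hK : 0 < K) (hε₀ : 0 < ε)
    (hε : 2 * C * K * ε ≤ 1) {ξ : EuclideanSpace ℝ (Fin n)} (hξ : ξ ∈ brNbhd ω ε X) :
    ω 0 / (2 * C * K) / ε < ω ξ := by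
  obtain ⟨ξ₀, -, h⟩ := mem_brNbhd.1 hξ
  have : ω 0 < 2 * C * K * ε * ω ξ :=
    calc ω 0 ≤ K * ω (ξ - ξ₀) := h₀ _
      _ < K * (2 * C * ε * ω ξ) := by
          gcongr; exact sub_lt_of_sub_lt_rebase hω hSA hneg hC.le hK.le hε₀.le hε h
      _ = 2 * C * K * ε * ω ξ := by ring
  rw [div_div, div_lt_iff₀ (by positivity)]
  linarith

end Neighborhoods

theorem brNbhd_properties_general {n : ℕ} (ω : EuclideanSpace ℝ (Fin n) → ℝ)
    (hω : IsWeight ω)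
    (hSA : IsSubAdditiveWeight ω) (hSH : SatisfiesSH ω) :
    (∀ ε : ℝ, 0 < ε → ∃ ε' : ℝ, 0 < ε' ∧ ε' < ε ∧
      ∀ X : Set (EuclideanSpace ℝ (Fin n)),
        brNbhd ω ε' (brNbhd ω ε' X) ⊆ brNbhd ω ε X ∧
        brNbhd ω ε' ((brNbhd ω ε X)ᶜ) ⊆ (brNbhd ω ε' X)ᶜ) ∧
    (∃ chat εhat : ℝ, 0 < chat ∧ 0 < εhat ∧ εhat < 1 ∧
      ∀ (X : Set (EuclideanSpace ℝ (Fin n))) (ε : ℝ), 0 < ε → ε ≤ εhat →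
        ∀ ξ ∈ brNbhd ω ε X, chat / ε < ω ξ) := by
  obtain ⟨hpos, -, -⟩ := hω
  have hω : ∀ ξ, 0 ≤ ω ξ := fun ξ => (hpos ξ).le
  obtain ⟨C, hC, hSA⟩ := hSA
  obtain ⟨K, hK, hSH⟩ := hSH
  have hneg : ∀ ζ, ω (-ζ) ≤ K * ω ζ := fun ζ => by simpa using hSH ζ (-1) (by norm_num)
  have h₀ : ∀ ζ, ω 0 ≤ K * ω ζ := fun ζ => by simpa using hSH ζ 0 (by norm_num)
  refine ⟨fun ε hε => ?_, ?_⟩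
  · -- each smallness condition on `ε'` holds on a right neighbourhood of `0`
    obtain ⟨ε', ⟨h₁, h₂, h₃, h₄, h₅⟩, hε'⟩ := (eventually_nhdsWithin_of_eventually_nhds
      ((eventually_mul_lt 1 hε).and <| (eventually_mul_lt 1 one_pos).and <|
        (eventually_mul_lt (2 * C * K) one_pos).and <|
        (eventually_mul_lt (C * (2 * C + 1)) hε).and <|
        eventually_mul_lt (C * (4 * C ^ 2 * K + 1)) hε)
      |>.and self_mem_nhdsWithin).exists (f := 𝓝[>] (0 : ℝ))
    rw [one_mul] at h₁ h₂
    exact ⟨ε', hε', h₁, fun X =>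
      ⟨brNbhd_brNbhd_subset hω hSA hC hε'.le h₂.le h₄.le,
        brNbhd_compl_brNbhd_subset hω hSA hneg hC hK hε'.le h₂.le h₃.le h₅.le⟩⟩
  · refine ⟨ω 0 / (2 * C * K), 1 / (2 * C * K + 2), div_pos (hpos 0) (by positivity),
      by positivity, by rw [div_lt_one (by positivity)]; nlinarith [mul_pos hC hK], ?_⟩
    intro X ε hε hεhat ξ hξ
    have hε' : 2 * C * K * ε ≤ 1 := by
      rw [le_div_iff₀ (by positivity)] at hεhat
      nlinarith
    exact lt_weight_of_mem_brNbhd hω hSA hneg h₀ hC hK hε hε' hξ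

/-- Basic properties of `[ω]`-neighborhoods for a continuous weight `ω` satisfying (SA)
and (SH): (1) for every `ε > 0` there is `0 < ε' < ε` with
`(X_{[ε'ω]})_{[ε'ω]} ⊆ X_{[εω]}` and `(ℝⁿ ∖ X_{[εω]})_{[ε'ω]} ⊆ ℝⁿ ∖ X_{[ε'ω]}` for all `X`;
(2) there are `ĉ > 0` and `0 < ε̂ < 1` such that `ξ ∈ X_{[εω]}` implies `ω(ξ) > ĉ/ε`
whenever `0 < ε ≤ ε̂`. -/
theorem brNbhd_properties {n : ℕ} (ω : EuclideanSpace ℝ (Fin n) → ℝ)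
    (hω_cont : Continuous ω) (hω : IsWeight ω)
    (hSA : IsSubAdditiveWeight ω) (hSH : SatisfiesSH ω) :
    (∀ ε : ℝ, 0 < ε → ∃ ε' : ℝ, 0 < ε' ∧ ε' < ε ∧
      ∀ X : Set (EuclideanSpace ℝ (Fin n)),
        brNbhd ω ε' (brNbhd ω ε' X) ⊆ brNbhd ω ε X ∧
        brNbhd ω ε' ((brNbhd ω ε X)ᶜ) ⊆ (brNbhd ω ε' X)ᶜ) ∧
    (∃ chat εhat : ℝ, 0 < chat ∧ 0 < εhat ∧ εhat < 1 ∧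
      ∀ (X : Set (EuclideanSpace ℝ (Fin n))) (ε : ℝ), 0 < ε → ε ≤ εhat →
        ∀ ξ ∈ brNbhd ω ε X, chat / ε < ω ξ) :=
  brNbhd_properties_general ω hω hSA hSH
end

section
/- In ℝ², let M = (1,2) so that ⟨ξ⟩_M = (1+ξ₁²+ξ₂⁴)^{1/2}, and consider the symbol P(x,ξ) = i x₁ ξ₁ − ξ₁ + ξ₂² of the operator x₁∂_{x₁} + i∂_{x₁} − ∂²_{x₂}. For 0 < k < 1 let X_k = {(ξ₁,ξ₂) ∈ ℝ² : ξ₁ ≤ (1−k)ξ₂² or ξ₁ ≥ ξ₂²/(1−k)}. Then for every x₂⁰ ∈ ℝ and every 0 < k < 1 there exist constants c > 0 and ε′ > 0 such that |P((0,x₂⁰),ξ)| ≥ c ⟨ξ⟩_M for all ξ ∈ (X_k)_{[ε′⟨·⟩_M]}; that is, P is microlocally [⟨·⟩_M]-elliptic in X_k at every point (0,x₂⁰). -/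
/-- The quasi-homogeneous weight `⟨ξ⟩_M = (1 + ξ₁² + ξ₂⁴)^(1/2)` on `ℝ²`, for `M = (1,2)`. -/
noncomputable def qw2 (ξ : ℝ × ℝ) : ℝ :=
  Real.sqrt (1 + ξ.1 ^ 2 + ξ.2 ^ 4)

/-- The symbol `P(x,ξ) = i x₁ ξ₁ - ξ₁ + ξ₂²` of the operator `x₁∂₁ + i∂₁ - ∂₂²`. -/
noncomputable def Psymb (x ξ : ℝ × ℝ) : ℂ :=
  Complex.I * (x.1 : ℂ) * (ξ.1 : ℂ) - (ξ.1 : ℂ) + (ξ.2 : ℂ) ^ 2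

/-- The set `X_k = {ξ ∈ ℝ² : ξ₁ ≤ (1-k) ξ₂²  or  ξ₁ ≥ ξ₂²/(1-k)}`. -/
def Xk (k : ℝ) : Set (ℝ × ℝ) :=
  {ξ | ξ.1 ≤ (1 - k) * ξ.2 ^ 2 ∨ ξ.2 ^ 2 / (1 - k) ≤ ξ.1}

/-- The `[⟨·⟩_M]`-neighborhood of size `ε` of `X ⊆ ℝ²`. -/
def brNbhd2 (ε : ℝ) (X : Set (ℝ × ℝ)) : Set (ℝ × ℝ) :=
  ⋃ ξ₀ ∈ X, {ξ | qw2 (ξ - ξ₀) < ε * qw2 ξ₀}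

/-
On the hyperplane `x₁ = 0` the symbol reduces to the real function `f(ξ) = ξ₂² - ξ₁`, which
vanishes exactly on the parabola `ξ₁ = ξ₂²`. On `X_k`, which keeps a fixed relative distance
from that parabola, `|f(ξ)| ≥ (k/2)(|ξ₁| + ξ₂²) ≳ ⟨ξ⟩_M` once `⟨ξ⟩_M` is large. The
quasi-homogeneous weight is adapted to `f`: if `⟨η⟩_M ≤ s² ⟨ξ₀⟩_M`, then `f` moves by at most
`4 s ⟨ξ₀⟩_M` between `ξ₀` and `ξ₀ + η`, and `⟨ξ₀ + η⟩_M ≲ ⟨ξ₀⟩_M`. Since `⟨η⟩_M ≥ 1`, a point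
of the `ε`-neighbourhood can only come from some `ξ₀ ∈ X_k` with `⟨ξ₀⟩_M > 1/ε`, so for `ε`
small the lower bound survives the perturbation.
-/

lemma norm_Psymb_zero_fst (x₂ : ℝ) (ξ : ℝ × ℝ) : ‖Psymb (0, x₂) ξ‖ = |ξ.2 ^ 2 - ξ.1| := by
  have h : Psymb (0, x₂) ξ = ((ξ.2 ^ 2 - ξ.1 : ℝ) : ℂ) := by
    simp only [Psymb]
    push_cast
    ring
  rw [h, Complex.norm_real, Real.norm_eq_abs]

lemma one_le_qw2 (ξ : ℝ × ℝ) : 1 ≤ qw2 ξ :=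
  Real.one_le_sqrt.2 (by nlinarith [sq_nonneg ξ.1, sq_nonneg (ξ.2 ^ 2)])

lemma abs_fst_le_qw2 (ξ : ℝ × ℝ) : |ξ.1| ≤ qw2 ξ :=
  Real.abs_le_sqrt (by nlinarith [sq_nonneg (ξ.2 ^ 2)])

lemma sq_snd_le_qw2 (ξ : ℝ × ℝ) : ξ.2 ^ 2 ≤ qw2 ξ :=
  Real.le_sqrt_of_sq_le (by nlinarith [sq_nonneg ξ.1])

lemma qw2_le_one_add_abs_fst_add_sq_snd (ξ : ℝ × ℝ) : qw2 ξ ≤ 1 + |ξ.1| + ξ.2 ^ 2 := by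
  refine Real.sqrt_le_iff.2 ⟨by positivity, ?_⟩
  have h : ξ.1 ^ 2 = |ξ.1| ^ 2 := (sq_abs _).symm
  nlinarith [abs_nonneg ξ.1, sq_nonneg ξ.2, mul_nonneg (abs_nonneg ξ.1) (sq_nonneg ξ.2)]

lemma qw2_add_le (ξ η : ℝ × ℝ) : qw2 (ξ + η) ≤ 4 * (qw2 ξ + qw2 η) := by
  have h₁ : |ξ.1 + η.1| ≤ |ξ.1| + |η.1| := abs_add_le _ _
  have h₂ : (ξ.2 + η.2) ^ 2 ≤ 2 * ξ.2 ^ 2 + 2 * η.2 ^ 2 := by nlinarith [sq_nonneg (ξ.2 - η.2)]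
  have := qw2_le_one_add_abs_fst_add_sq_snd (ξ + η)
  simp only [Prod.fst_add, Prod.snd_add] at this
  linarith [abs_fst_le_qw2 ξ, abs_fst_le_qw2 η, sq_snd_le_qw2 ξ, sq_snd_le_qw2 η,
    one_le_qw2 ξ, one_le_qw2 η]

lemma mul_abs_fst_add_sq_snd_le_of_mem_Xk {k : ℝ} (hk : 0 < k) (hk1 : k < 1) {ξ : ℝ × ℝ}
    (hξ : ξ ∈ Xk k) : k / 2 * (|ξ.1| + ξ.2 ^ 2) ≤ |ξ.2 ^ 2 - ξ.1| := by
  have hb : 0 ≤ ξ.2 ^ 2 := sq_nonneg _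
  have hkb : 0 ≤ k * ξ.2 ^ 2 := mul_nonneg hk.le hb
  rcases hξ with h | h
  · rw [abs_of_nonneg (by linarith : 0 ≤ ξ.2 ^ 2 - ξ.1)]
    rcases le_or_gt ξ.1 0 with ha | ha
    · rw [abs_of_nonpos ha]; nlinarith
    · rw [abs_of_pos ha]; nlinarith
  · have h' : ξ.2 ^ 2 ≤ (1 - k) * ξ.1 := (div_le_iff₀' (by linarith)).1 h
    have ha : 0 ≤ ξ.1 := by nlinarith
    have hka : 0 ≤ k * ξ.1 := mul_nonneg hk.le ha
    have hba : ξ.2 ^ 2 ≤ ξ.1 := by linarith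
    rw [abs_of_nonneg ha, abs_sub_comm, abs_of_nonneg (by linarith : 0 ≤ ξ.1 - ξ.2 ^ 2)]
    nlinarith [mul_le_mul_of_nonneg_left hba hk.le]

lemma abs_sub_sub_le_of_qw2_sub_le {s : ℝ} (hs0 : 0 ≤ s) (hs1 : s ≤ 1) {ξ ξ₀ : ℝ × ℝ}
    (h : qw2 (ξ - ξ₀) ≤ s ^ 2 * qw2 ξ₀) :
    |(ξ.2 ^ 2 - ξ.1) - (ξ₀.2 ^ 2 - ξ₀.1)| ≤ 4 * s * qw2 ξ₀ := by
  set Q := qw2 ξ₀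
  set e := ξ.1 - ξ₀.1
  set d := ξ.2 - ξ₀.2
  have he : |e| ≤ s ^ 2 * Q := (abs_fst_le_qw2 (ξ - ξ₀)).trans h
  have hd : d ^ 2 ≤ s ^ 2 * Q := (sq_snd_le_qw2 (ξ - ξ₀)).trans h
  have hQ : 0 ≤ Q := zero_le_one.trans (one_le_qw2 ξ₀)
  have hs2 : s ^ 2 * Q ≤ s * Q := mul_le_mul_of_nonneg_right (by nlinarith) hQ
  have hcross : |ξ₀.2 * d| ≤ s * Q := by
    refine abs_le_of_sq_le_sq ?_ (by positivity)
    calc (ξ₀.2 * d) ^ 2 = ξ₀.2 ^ 2 * d ^ 2 := by ring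
      _ ≤ Q * (s ^ 2 * Q) := mul_le_mul (sq_snd_le_qw2 ξ₀) hd (sq_nonneg d) hQ
      _ = (s * Q) ^ 2 := by ring
  have hrepr : (ξ.2 ^ 2 - ξ.1) - (ξ₀.2 ^ 2 - ξ₀.1) = 2 * (ξ₀.2 * d) + d ^ 2 - e := by
    simp only [d, e]; ring
  rw [hrepr]
  calc |2 * (ξ₀.2 * d) + d ^ 2 - e| ≤ 2 * |ξ₀.2 * d| + d ^ 2 + |e| := by
        have := abs_sub (2 * (ξ₀.2 * d) + d ^ 2) e
        have := abs_add_le (2 * (ξ₀.2 * d)) (d ^ 2)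
        rw [abs_mul, abs_two, abs_of_nonneg (sq_nonneg d)] at this
        linarith
    _ ≤ 4 * s * Q := by linarith

/-- The symbol `P(x,ξ) = i x₁ ξ₁ - ξ₁ + ξ₂²` is microlocally `[⟨·⟩_M]`-elliptic in `X_k`
at every point `(0, x₂⁰)`: there are `c > 0` and `ε' > 0` with
`|P((0,x₂⁰),ξ)| ≥ c ⟨ξ⟩_M` for all `ξ ∈ (X_k)_{[ε'⟨·⟩_M]}`. -/
theorem Psymb_microlocally_elliptic :
    ∀ (x₂0 : ℝ) (k : ℝ), 0 < k → k < 1 →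
      ∃ c ε' : ℝ, 0 < c ∧ 0 < ε' ∧
        ∀ ξ ∈ brNbhd2 ε' (Xk k), c * qw2 ξ ≤ ‖Psymb (0, x₂0) ξ‖ := by
  intro x₂0 k hk hk1
  set s := k / 16 with hs
  have hs0 : 0 ≤ s := by positivity
  have hs1 : s ^ 2 ≤ 1 / 4 := by nlinarith
  refine ⟨k / 64, s ^ 2, by positivity, by positivity, fun ξ hξ => ?_⟩
  obtain ⟨ξ₀, hX, hnear : qw2 (ξ - ξ₀) < s ^ 2 * qw2 ξ₀⟩ := Set.mem_iUnion₂.1 hξ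
  set Q := qw2 ξ₀
  have hQ0 : 0 ≤ Q := zero_le_one.trans (one_le_qw2 ξ₀)
  have hQ : 1 < s ^ 2 * Q := (one_le_qw2 (ξ - ξ₀)).trans_lt hnear
  have hupper : qw2 ξ ≤ 8 * Q := by
    have := qw2_add_le ξ₀ (ξ - ξ₀)
    rw [add_sub_cancel] at this
    nlinarith
  have hfar : k / 2 * (Q - 1) ≤ |ξ₀.2 ^ 2 - ξ₀.1| := by
    have := qw2_le_one_add_abs_fst_add_sq_snd ξ₀
    have := mul_abs_fst_add_sq_snd_le_of_mem_Xk hk hk1 hX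
    nlinarith
  have hpert := abs_sub_sub_le_of_qw2_sub_le hs0 (by nlinarith) hnear.le
  rw [norm_Psymb_zero_fst]
  have hk2 : k / 2 ≤ k / 8 * Q := by
    nlinarith [mul_lt_mul_of_pos_left hQ hk, mul_le_mul_of_nonneg_right hs1 hQ0]
  calc k / 64 * qw2 ξ ≤ k / 2 * (Q - 1) - 4 * s * Q := by nlinarith
    _ ≤ |ξ₀.2 ^ 2 - ξ₀.1| - |(ξ.2 ^ 2 - ξ.1) - (ξ₀.2 ^ 2 - ξ₀.1)| := by gcongr
    _ ≤ |ξ.2 ^ 2 - ξ.1| := by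
      linarith [abs_sub_abs_le_abs_sub (ξ₀.2 ^ 2 - ξ₀.1) (ξ.2 ^ 2 - ξ.1),
        abs_sub_comm (ξ₀.2 ^ 2 - ξ₀.1) (ξ.2 ^ 2 - ξ.1)]
end
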